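/- arXiv:1904.04194 — 6 statements merged into one kernel-verified Lean document; each statement's English description precedes it below -/
import Mathlib

section
/- Let Δ ⊆ ℝ_{≥0}^n be a Newton polyhedron with a loose edge E whose endpoints are a, b ∈ ℝ_{≥0}^n. Then for every c ∈ Δ and every ξ ∈ ℝ_{≥0}^n satisfying ⟨ξ,a⟩ = ⟨ξ,b⟩, one has ⟨ξ,c⟩ ≥ ⟨ξ,a⟩. -/
open Finset

def dotp {n : ℕ} (ξ a : Fin n → ℝ) : ℝ := ∑ i, ξ i * a i

def IsNewtonPolyhedron {n : ℕ} (Δ : Set (Fin n → ℝ)) : Prop :=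
  ∃ S : Finset (Fin n → ℝ), S.Nonempty ∧ (∀ a ∈ S, ∀ i, ∃ m : ℕ, a i = (m : ℝ)) ∧
    Δ = {x | ∃ y ∈ convexHull ℝ (S : Set (Fin n → ℝ)),
          ∃ z : Fin n → ℝ, (∀ i, 0 ≤ z i) ∧ x = y + z}

def NPface {n : ℕ} (Δ : Set (Fin n → ℝ)) (ξ : Fin n → ℝ) : Set (Fin n → ℝ) :=
  {a ∈ Δ | ∀ b ∈ Δ, dotp ξ a ≤ dotp ξ b}

/-- `A` is a face of `Δ` (cut out by some `ξ ∈ ℝ_{≥0}ⁿ`). -/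
def IsFaceOf {n : ℕ} (Δ A : Set (Fin n → ℝ)) : Prop :=
  ∃ ξ : Fin n → ℝ, (∀ i, 0 ≤ ξ i) ∧ A = NPface Δ ξ

/-- Dimension of a subset of `ℝⁿ`: the rank of its vector span. -/
noncomputable def npDim {n : ℕ} (A : Set (Fin n → ℝ)) : ℕ :=
  Module.finrank ℝ (vectorSpan ℝ A)

/-- A loose edge: a compact 1-dimensional face not contained in any compact
face of dimension ≥ 2. -/
def IsLooseEdge {n : ℕ} (Δ E : Set (Fin n → ℝ)) : Prop :=
  IsFaceOf Δ E ∧ IsCompact E ∧ npDim E = 1 ∧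
    ∀ F, IsFaceOf Δ F → IsCompact F → 2 ≤ npDim F → ¬ E ⊆ F

/-!
Suppose `⟨ξ, c⟩ < ⟨ξ, a⟩` for some `c ∈ Δ`; then also for some vertex `s`. The edge `E` is cut
out by some `η`, which is strictly positive because `E` is compact. Tilt `η` towards `ξ` along
`ζₜ = (1 - t) η + t ξ` up to the critical `t < 1` beyond which `a` stops minimizing `ζₜ` on the
vertices: there a vertex `s₁` with `⟨ξ, s₁⟩ < ⟨ξ, a⟩` ties with `a` and `b`. Since `ζₜ > 0`, the
face it cuts out is compact; it contains `E` and `s₁ ∉ aff E`, so it has dimension `≥ 2`, and `E`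
is not loose.
-/

open Pointwise

lemma dotp_eq_dotProduct {n : ℕ} (ξ x : Fin n → ℝ) : dotp ξ x = ξ ⬝ᵥ x := rfl

lemma isLinearMap_dotp {n : ℕ} (ξ : Fin n → ℝ) : IsLinearMap ℝ (dotp ξ) :=
  ⟨dotProduct_add ξ, fun c x => dotProduct_smul c ξ x⟩

def newtonPolyhedron {n : ℕ} (S : Set (Fin n → ℝ)) : Set (Fin n → ℝ) :=
  convexHull ℝ S + Set.Ici 0

lemma IsNewtonPolyhedron.exists_eq_newtonPolyhedron {n : ℕ} {Δ : Set (Fin n → ℝ)}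
    (hΔ : IsNewtonPolyhedron Δ) :
    ∃ S : Finset (Fin n → ℝ), (∀ s ∈ S, 0 ≤ s) ∧ Δ = newtonPolyhedron (S : Set (Fin n → ℝ)) := by
  obtain ⟨S, -, hSnat, rfl⟩ := hΔ
  refine ⟨S, fun s hs i => ?_, ?_⟩
  · obtain ⟨m, hm⟩ := hSnat s hs i
    simp [hm]
  · ext x
    simp only [newtonPolyhedron, Set.mem_add, Set.mem_Ici, Set.mem_ofPred_eq]
    exact ⟨fun ⟨y, hy, z, hz, hx⟩ => ⟨y, hy, z, hz, hx.symm⟩,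
      fun ⟨y, hy, z, hz, hx⟩ => ⟨y, hy, z, hz, hx.symm⟩⟩

section newtonPolyhedron

variable {n : ℕ} {S : Set (Fin n → ℝ)}

lemma subset_newtonPolyhedron : S ⊆ newtonPolyhedron S := fun s hs =>
  ⟨s, subset_convexHull ℝ S hs, 0, Set.self_mem_Ici, add_zero s⟩

lemma add_mem_newtonPolyhedron {x z : Fin n → ℝ} (hx : x ∈ newtonPolyhedron S) (hz : 0 ≤ z) :
    x + z ∈ newtonPolyhedron S := by
  obtain ⟨y, hy, w, hw, rfl⟩ := hx
  exact ⟨y, hy, w + z, add_nonneg hw hz, (add_assoc y w z).symm⟩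

lemma nonneg_of_mem_newtonPolyhedron (hS : ∀ s ∈ S, 0 ≤ s) {x : Fin n → ℝ}
    (hx : x ∈ newtonPolyhedron S) : 0 ≤ x := by
  obtain ⟨y, hy, z, hz, rfl⟩ := hx
  exact add_nonneg (convexHull_min hS (convex_Ici 0) hy) hz

lemma le_dotp_of_mem_newtonPolyhedron {ζ : Fin n → ℝ} (hζ : 0 ≤ ζ) {m : ℝ}
    (hm : ∀ s ∈ S, m ≤ dotp ζ s) {x : Fin n → ℝ} (hx : x ∈ newtonPolyhedron S) :
    m ≤ dotp ζ x := by
  obtain ⟨y, hy, z, hz, rfl⟩ := hx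
  calc m ≤ dotp ζ y := convexHull_min hm (convex_halfSpace_ge (isLinearMap_dotp ζ) m) hy
    _ ≤ dotp ζ y + dotp ζ z := le_add_of_nonneg_right (dotProduct_nonneg_of_nonneg hζ hz)
    _ = dotp ζ (y + z) := (dotProduct_add ζ y z).symm

lemma convex_newtonPolyhedron : Convex ℝ (newtonPolyhedron S) :=
  (convex_convexHull ℝ S).add (convex_Ici 0)

lemma isClosed_newtonPolyhedron (hS : S.Finite) : IsClosed (newtonPolyhedron S) :=
  isClosed_Ici.add_left_of_isCompact (hS.isCompact_convexHull (𝕜 := ℝ))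

end newtonPolyhedron

section NPface

variable {n : ℕ} {Δ : Set (Fin n → ℝ)} {ζ : Fin n → ℝ}

lemma NPface_eq_inter_iInter :
    NPface Δ ζ = Δ ∩ ⋂ y ∈ Δ, {x | dotp ζ x ≤ dotp ζ y} := by
  ext x
  simp [NPface]

lemma isClosed_NPface (hΔ : IsClosed Δ) : IsClosed (NPface Δ ζ) := by
  rw [NPface_eq_inter_iInter]
  exact hΔ.inter (isClosed_biInter fun y _ =>
    isClosed_le (continuous_const.dotProduct continuous_id) continuous_const)

lemma convex_NPface (hΔ : Convex ℝ Δ) : Convex ℝ (NPface Δ ζ) := by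
  rw [NPface_eq_inter_iInter]
  exact hΔ.inter (convex_iInter₂ fun y _ =>
    convex_halfSpace_le (isLinearMap_dotp ζ) _)

lemma dotp_eq_of_mem_NPface {a b : Fin n → ℝ} (ha : a ∈ NPface Δ ζ) (hb : b ∈ NPface Δ ζ) :
    dotp ζ a = dotp ζ b :=
  le_antisymm (ha.2 b hb.1) (hb.2 a ha.1)

lemma mem_NPface_of_dotp_eq {a b : Fin n → ℝ} (ha : a ∈ NPface Δ ζ) (hb : b ∈ Δ)
    (hab : dotp ζ b = dotp ζ a) : b ∈ NPface Δ ζ :=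
  ⟨hb, fun y hy => hab ▸ ha.2 y hy⟩

lemma isCompact_NPface (hΔ : IsClosed Δ) (hΔ0 : ∀ x ∈ Δ, 0 ≤ x) (hζ : ∀ i, 0 < ζ i) :
    IsCompact (NPface Δ ζ) := by
  rcases (NPface Δ ζ).eq_empty_or_nonempty with h | ⟨a, ha⟩
  · exact h ▸ isCompact_empty
  refine (isCompact_Icc (a := 0) (b := fun i => dotp ζ a / ζ i)).of_isClosed_subset
    (isClosed_NPface hΔ) fun x hx => ⟨hΔ0 x hx.1, fun i => ?_⟩
  have hx0 := hΔ0 x hx.1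
  have hxi : ζ i * x i ≤ dotp ζ x :=
    Finset.single_le_sum (fun j _ => mul_nonneg (hζ j).le (hx0 j)) (Finset.mem_univ i)
  rw [le_div_iff₀ (hζ i), mul_comm]
  exact hxi.trans (hx.2 a ha.1)

/-- If some coordinate of `η` were `≤ 0`, the face would contain the ray `a + ℝ_{≥0} eᵢ`. -/
lemma pos_of_isCompact_NPface (hΔ : ∀ x ∈ Δ, ∀ z, 0 ≤ z → x + z ∈ Δ)
    (hK : IsCompact (NPface Δ ζ)) {a : Fin n → ℝ} (ha : a ∈ NPface Δ ζ) (i : Fin n) :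
    0 < ζ i := by
  by_contra! hζi
  have hray : ∀ t : ℝ, 0 ≤ t → a + Pi.single i t ∈ NPface Δ ζ := fun t ht =>
    ⟨hΔ a ha.1 _ (Pi.single_nonneg.2 ht), fun y hy =>
      calc dotp ζ (a + Pi.single i t) = dotp ζ a + ζ i * t := by
            rw [dotp_eq_dotProduct, dotProduct_add, dotProduct_single, dotp_eq_dotProduct]
        _ ≤ dotp ζ a := add_le_of_nonpos_right (mul_nonpos_of_nonpos_of_nonneg hζi ht)
        _ ≤ dotp ζ y := ha.2 y hy⟩
  obtain ⟨M, hM⟩ := (hK.image (continuous_apply i)).isBounded.bddAbove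
  have := hM ⟨_, hray (max (M - a i + 1) 0) (le_max_right _ _), rfl⟩
  simp only [Pi.add_apply, Pi.single_eq_same] at this
  linarith [le_max_left (M - a i + 1) 0]

end NPface

lemma two_le_npDim {n : ℕ} {A : Set (Fin n → ℝ)} {a b c : Fin n → ℝ} (ha : a ∈ A) (hb : b ∈ A)
    (hc : c ∈ A) (hli : LinearIndependent ℝ ![b - a, c - a]) : 2 ≤ npDim A := by
  have hspan : Submodule.span ℝ (Set.range ![b - a, c - a]) ≤ vectorSpan ℝ A := by
    rw [Submodule.span_le, Set.range_subset_iff]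
    intro i
    fin_cases i
    exacts [vsub_mem_vectorSpan ℝ hb ha, vsub_mem_vectorSpan ℝ hc ha]
  calc 2 = Module.finrank ℝ (Submodule.span ℝ (Set.range ![b - a, c - a])) := by
        rw [finrank_span_eq_card hli, Fintype.card_fin]
    _ ≤ npDim A := Submodule.finrank_mono hspan

lemma LinearIndependent.pair_of_map_eq_zero {K V : Type*} [Field K] [AddCommGroup V]
    [Module K V] (f : V →ₗ[K] K) {u v : V} (hu : u ≠ 0) (hfu : f u = 0) (hfv : f v ≠ 0) :
    LinearIndependent K ![u, v] :=
  (LinearIndependent.pair_iff' hu).2 fun c hc => hfv (by rw [← hc, map_smul, hfu, smul_zero])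

/-- Tilting `f` towards `g` as far as `a` stays a minimizer of `(1 - t) f + t g` on `S`: at the
critical `t` a point with `g s₁ < g a` becomes a second minimizer. -/
lemma exists_critical_tilt {α : Type*} (S : Finset α) (f g : α → ℝ) (a : α)
    (hf : ∀ s ∈ S, f a ≤ f s) (hg : ∃ s ∈ S, g s < g a) :
    ∃ t : ℝ, 0 ≤ t ∧ t < 1 ∧
      (∀ s ∈ S, (1 - t) * f a + t * g a ≤ (1 - t) * f s + t * g s) ∧
      ∃ s₁ ∈ S, g s₁ < g a ∧ (1 - t) * f s₁ + t * g s₁ = (1 - t) * f a + t * g a := by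
  classical
  have hden : ∀ s ∈ S, g s < g a → 0 < (f s - f a) + (g a - g s) := fun s hs hgs => by
    linarith [hf s hs]
  have hgap : ∀ s t, (1 - t) * f s + t * g s - ((1 - t) * f a + t * g a) =
      (f s - f a) - t * ((f s - f a) + (g a - g s)) := fun s t => by ring
  -- `τ s` is the value of `t` at which `s` catches up with `a`
  let τ : α → ℝ := fun s => (f s - f a) / ((f s - f a) + (g a - g s))
  obtain ⟨s₁, hs₁, hτ⟩ := (S.filter fun s => g s < g a).exists_min_image τ
    (by simpa only [Finset.filter_nonempty_iff] using hg)
  obtain ⟨hs₁S, hs₁⟩ := Finset.mem_filter.1 hs₁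
  have hden₁ := hden s₁ hs₁S hs₁
  have hτ₀ : 0 ≤ τ s₁ := div_nonneg (by linarith [hf s₁ hs₁S]) hden₁.le
  have hτ₁ : τ s₁ < 1 := (div_lt_one hden₁).2 (by linarith)
  refine ⟨τ s₁, hτ₀, hτ₁, fun s hs => ?_, s₁, hs₁S, hs₁, ?_⟩
  · rw [← sub_nonneg]
    by_cases hgs : g s < g a
    · have := (le_div_iff₀ (hden s hs hgs)).1 (hτ s (Finset.mem_filter.2 ⟨hs, hgs⟩))
      rw [hgap]
      linarith
    · rw [show ∀ t, (1 - t) * f s + t * g s - ((1 - t) * f a + t * g a) =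
          (1 - t) * (f s - f a) + t * (g s - g a) from fun t => by ring]
      exact add_nonneg (mul_nonneg (sub_nonneg.2 hτ₁.le) (sub_nonneg.2 (hf s hs)))
        (mul_nonneg hτ₀ (sub_nonneg.2 (not_lt.1 hgs)))
  · rw [← sub_eq_zero, hgap, div_mul_cancel₀ _ hden₁.ne', sub_self]

/-- if `E` is a loose edge with endpoints `a`, `b`, then for every
`c ∈ Δ` and every `ξ ∈ ℝ_{≥0}ⁿ` with `⟨ξ,a⟩ = ⟨ξ,b⟩`, one has `⟨ξ,c⟩ ≥ ⟨ξ,a⟩`. -/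
theorem loose_edge_min {n : ℕ} (Δ E : Set (Fin n → ℝ)) (hΔ : IsNewtonPolyhedron Δ)
    (hE : IsLooseEdge Δ E) (a b : Fin n → ℝ) (hab : a ≠ b) (hseg : E = segment ℝ a b) :
    ∀ c ∈ Δ, ∀ ξ : Fin n → ℝ, (∀ i, 0 ≤ ξ i) → dotp ξ a = dotp ξ b →
      dotp ξ a ≤ dotp ξ c := by
  intro c hc ξ hξ hξab
  by_contra! hca
  obtain ⟨S, hS, rfl⟩ := hΔ.exists_eq_newtonPolyhedron
  obtain ⟨⟨η, -, rfl⟩, hEc, -, hloose⟩ := hE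
  have ha : a ∈ NPface _ η := hseg ▸ left_mem_segment ℝ a b
  have hb : b ∈ NPface _ η := hseg ▸ right_mem_segment ℝ a b
  have hη : ∀ i, 0 < η i :=
    pos_of_isCompact_NPface (fun _ hx _ hz => add_mem_newtonPolyhedron hx hz) hEc ha
  obtain ⟨s, hsS, hs⟩ : ∃ s ∈ S, dotp ξ s < dotp ξ a := by
    by_contra! h
    exact hca.not_ge (le_dotp_of_mem_newtonPolyhedron hξ h hc)
  obtain ⟨t, ht0, ht1, hmin, s₁, hs₁S, hs₁, hs₁eq⟩ := exists_critical_tilt S (dotp η) (dotp ξ) a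
    (fun s hs => ha.2 s (subset_newtonPolyhedron hs)) ⟨s, hsS, hs⟩
  set ζ : Fin n → ℝ := (1 - t) • η + t • ξ
  have hζ : ∀ i, 0 < ζ i := fun i => by
    have := mul_pos (sub_pos.2 ht1) (hη i)
    have := mul_nonneg ht0 (hξ i)
    simp only [ζ, Pi.add_apply, Pi.smul_apply, smul_eq_mul]
    linarith
  have hζdotp : ∀ x, dotp ζ x = (1 - t) * dotp η x + t * dotp ξ x := fun x => by
    simp only [ζ, dotp_eq_dotProduct, add_dotProduct, smul_dotProduct, smul_eq_mul]
  have haζ : a ∈ NPface _ ζ := ⟨ha.1, fun x hx => le_dotp_of_mem_newtonPolyhedron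
    (fun i => (hζ i).le) (fun s hs => by simpa only [hζdotp] using hmin s hs) hx⟩
  have hbζ : b ∈ NPface _ ζ := mem_NPface_of_dotp_eq haζ hb.1 <| by
    rw [hζdotp, hζdotp, dotp_eq_of_mem_NPface ha hb, hξab]
  have hs₁ζ : s₁ ∈ NPface _ ζ := mem_NPface_of_dotp_eq haζ (subset_newtonPolyhedron hs₁S) <| by
    rw [hζdotp, hζdotp, hs₁eq]
  refine hloose _ ⟨ζ, fun i => (hζ i).le, rfl⟩
    (isCompact_NPface (isClosed_newtonPolyhedron S.finite_toSet)
      (fun _ => nonneg_of_mem_newtonPolyhedron hS) hζ)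
    (two_le_npDim haζ hbζ hs₁ζ ?_) ?_
  · have hsub : ∀ x, IsLinearMap.mk' _ (isLinearMap_dotp ξ) (x - a) = dotp ξ x - dotp ξ a :=
      fun x => dotProduct_sub ξ x a
    exact .pair_of_map_eq_zero _ (sub_ne_zero.2 hab.symm) (by rw [hsub, hξab, sub_self])
      (by rw [hsub]; exact sub_ne_zero.2 hs₁.ne)
  · rw [hseg]
    exact (convex_NPface convex_newtonPolyhedron).segment_subset haζ hbζ
end

section
/- Let c ∈ ℤ^n be a point having at least one strictly positive coordinate and at least one strictly negative coordinate. Then there exists a basis ξ_1, …, ξ_n of ℝ^n such that every ξ_i has all coordinates in ℤ_{≥0}, and ⟨ξ_i, c⟩ = 0 for i = 1, …, n−1. -/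
/-!
Pick `p` with `c p > 0` and `q` with `c q < 0`. For every `k`, pairing `k` with a coordinate
`r ∈ {p, q}` at which `c` has the opposite sign gives the nonnegative integer vector
`|c r| e_k + |c k| e_r` orthogonal to `c`. Replacing the vector attached to `p` (it equals the
one attached to `q`) by `e_p`, the resulting family is triangular (coordinates other than `p, q`
first, then `q`, then `p`), hence a basis; a permutation moves `e_p` to the last position.
-/

open Finset

theorem linearIndependent_of_triangular {ι R : Type*} [Fintype ι] [Ring R] [NoZeroDivisors R]
    (v : ι → ι → R) (rk : ι → ℕ) (hdiag : ∀ i, v i i ≠ 0)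
    (htri : ∀ i j, i ≠ j → v i j ≠ 0 → rk i < rk j) : LinearIndependent R v := by
  rw [Fintype.linearIndependent_iff]
  intro g hg j
  induction h : rk j using Nat.strong_induction_on generalizing j with
  | _ m ih =>
    have hj := congrFun hg j
    rw [Finset.sum_apply, Finset.sum_eq_single j] at hj
    · simpa [hdiag j] using hj
    · intro i _ hij
      by_cases hv : v i j = 0
      · simp [hv]
      · simp [ih (rk i) (h ▸ htri i j hij hv) i rfl]
    · simp

theorem abs_mul_add_abs_mul_eq_zero_of_mul_nonpos {α : Type*} [CommRing α] [LinearOrder α]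
    [IsStrictOrderedRing α] {a b : α} (h : a * b ≤ 0) : |b| * a + |a| * b = 0 := by
  rcases le_total 0 a with ha | ha <;> rcases le_total 0 b with hb | hb
  · rw [abs_of_nonneg ha, abs_of_nonneg hb]; nlinarith [mul_nonneg ha hb]
  · rw [abs_of_nonneg ha, abs_of_nonpos hb]; ring
  · rw [abs_of_nonpos ha, abs_of_nonneg hb]; ring
  · rw [abs_of_nonpos ha, abs_of_nonpos hb]; nlinarith [mul_nonneg_of_nonpos_of_nonpos ha hb]

namespace OrthoBasis

variable {ι : Type*} {c : ι → ℤ} {p q : ι}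

variable (c p q) in
def partner (k : ι) : ι := if 0 ≤ c k then q else p

theorem mul_partner_nonpos (hp : 0 < c p) (hq : c q < 0) (k : ι) :
    c k * c (partner c p q k) ≤ 0 := by
  unfold partner
  split_ifs with hk
  · exact mul_nonpos_of_nonneg_of_nonpos hk hq.le
  · exact (mul_neg_of_neg_of_pos (not_le.mp hk) hp).le

theorem partner_ne_self (hq : c q < 0) {k : ι} (hk : k ≠ p) : partner c p q k ≠ k := by
  unfold partner
  split_ifs with h
  · rintro rfl; omega
  · exact Ne.symm hk

variable [DecidableEq ι]

variable (c p q) in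
def orthoVec (k : ι) : ι → ℕ :=
  Pi.single k (c (partner c p q k)).natAbs + Pi.single (partner c p q k) (c k).natAbs

variable (c p q) in
def basisVec (k : ι) : ι → ℕ := if k = p then Pi.single p 1 else orthoVec c p q k

theorem orthoVec_orthogonal [Fintype ι] (hp : 0 < c p) (hq : c q < 0) (k : ι) :
    ∑ j, (orthoVec c p q k j : ℝ) * c j = 0 := by
  have h := abs_mul_add_abs_mul_eq_zero_of_mul_nonpos
    (by exact_mod_cast mul_partner_nonpos hp hq k : (c k : ℝ) * c (partner c p q k) ≤ 0)
  simpa [orthoVec, Pi.single_apply, add_mul, Finset.sum_add_distrib, Nat.cast_natAbs] using h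

theorem eq_or_eq_partner_of_orthoVec_ne_zero {k j : ι} (h : orthoVec c p q k j ≠ 0) :
    j = k ∨ j = partner c p q k := by
  by_contra! hj
  simp [orthoVec, hj.1, hj.2] at h

theorem linearIndependent_basisVec [Fintype ι] (hp : 0 < c p) (hq : c q < 0) :
    LinearIndependent ℝ (fun k j => (basisVec c p q k j : ℝ)) := by
  have hpq : p ≠ q := by rintro rfl; omega
  refine linearIndependent_of_triangular _ (fun k => if k = p then 2 else if k = q then 1 else 0)
    (fun k => ?_) (fun k j hkj hv => ?_)
  · by_cases hk : k = p
    · simp [basisVec, hk]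
    · have hr : c (partner c p q k) ≠ 0 := by unfold partner; split_ifs <;> omega
      simp [basisVec, hk, orthoVec, partner_ne_self hq hk, hr]
  · by_cases hk : k = p
    · subst hk
      simp [basisVec, Ne.symm hkj] at hv
    · obtain rfl | rfl := eq_or_eq_partner_of_orthoVec_ne_zero (by simpa [basisVec, hk] using hv)
      · exact absurd rfl hkj
      rcases le_or_gt 0 (c k) with hck | hck
      · have hkq : k ≠ q := by rintro rfl; omega
        simp [partner, hck, hk, hkq, hpq.symm]
      · simp only [partner, not_le.mpr hck, hk, if_true, if_false]
        split_ifs <;> omega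

end OrthoBasis

open OrthoBasis in
/-- if `c ∈ ℤⁿ` has a positive and a negative coordinate, then there is
a basis `ξ_1, …, ξ_n` of `ℝⁿ` with nonnegative integer entries such that
`⟨ξ_i, c⟩ = 0` for `i = 1, …, n-1`. -/
theorem exists_nonneg_integer_basis_orthogonal {n : ℕ} (c : Fin n → ℤ)
    (hpos : ∃ i, 0 < c i) (hneg : ∃ j, c j < 0) :
    ∃ ξ : Fin n → (Fin n → ℝ), LinearIndependent ℝ ξ ∧
      (∀ i k, ∃ m : ℕ, ξ i k = (m : ℝ)) ∧
      (∀ i : Fin n, (i : ℕ) < n - 1 → dotp (ξ i) (fun k => (c k : ℝ)) = 0) := by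
  obtain ⟨p, hp⟩ := hpos
  obtain ⟨q, hq⟩ := hneg
  have hn : 0 < n := p.pos
  let σ := Equiv.swap ⟨n - 1, by omega⟩ p
  refine ⟨fun i k => (basisVec c p q (σ i) k : ℝ),
    (linearIndependent_basisVec hp hq).comp σ σ.injective, fun i k => ⟨_, rfl⟩, fun i hi => ?_⟩
  have hσi : σ i ≠ p := by
    rw [Ne, Equiv.swap_apply_eq_iff, Equiv.swap_apply_right]
    exact Fin.ne_of_val_ne hi.ne
  simpa [dotp, basisVec, hσi] using orthoVec_orthogonal hp hq (σ i)
end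

section
/- Let M ⊆ ℤ_{≥0}^{n−1} consist of those z for which there exists α ∈ ℤ^n with ω(x^α) = z and ⟨ξ,α⟩ ≥ 0 for all ξ ∈ ℝ_{≥0}^n orthogonal to the loose edge E. Then M is closed under addition, and every w ∈ ℤ_{≥0}^{n−1} with dim R_w > 0 belongs to M. -/
open Finset

/-- Weight of an exponent `α` with respect to the vectors `ξ_j`. -/
def wtF {n m : ℕ} (ξ : Fin m → Fin n → ℕ) (α : Fin n →₀ ℕ) : Fin m → ℕ :=
  fun j => ∑ i, ξ j i * α i

/-- `R_w`: the `K`-span of the monomials of weight `w`. -/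
noncomputable def Rw (K : Type*) [Field K] {n m : ℕ} (ξ : Fin m → Fin n → ℕ)
    (w : Fin m → ℕ) : Submodule K (MvPolynomial (Fin n) K) :=
  Submodule.span K {p | ∃ α : Fin n →₀ ℕ, wtF ξ α = w ∧ p = MvPolynomial.monomial α (1 : K)}

/-- The set `M` of admissible weights: `z ∈ M` iff there is `α ∈ ℤⁿ` of weight `z`
pairing nonnegatively with every `ξ ∈ ℝ_{≥0}ⁿ` orthogonal to the direction `c`. -/
def Mset {n m : ℕ} (ξ : Fin m → Fin n → ℕ) (c : Fin n → ℤ) (z : Fin m → ℕ) : Prop :=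
  ∃ α : Fin n → ℤ, (∀ j, ∑ i, (ξ j i : ℤ) * α i = (z j : ℤ)) ∧
    ∀ η : Fin n → ℝ, (∀ i, 0 ≤ η i) → (∑ i, η i * (c i : ℝ)) = 0 →
      0 ≤ ∑ i, η i * (α i : ℝ)

/-- `c` is a primitive lattice vector. -/
def IsPrimitiveVec {n : ℕ} (c : Fin n → ℤ) : Prop :=
  (Finset.univ.gcd fun i => (c i).natAbs) = 1

/-- The segment `E` is parallel to the vector `c`. -/
def ParallelTo {n : ℕ} (E : Set (Fin n → ℝ)) (c : Fin n → ℤ) : Prop :=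
  ∃ a b : Fin n → ℝ, a ≠ b ∧ E = segment ℝ a b ∧
    ∃ t : ℝ, (b - a) = t • (fun i => (c i : ℝ))

/-- `ξ_1, …, ξ_{n-1}` are linearly independent and orthogonal to `c`. -/
def OrthSetup {n m : ℕ} (ξ : Fin m → Fin n → ℕ) (c : Fin n → ℤ) : Prop :=
  LinearIndependent ℝ (fun j => fun i => ((ξ j i : ℝ))) ∧
  ∀ j, ∑ i, (ξ j i : ℤ) * c i = 0

/-- Relatively prime polynomials: no nonconstant (non-unit) common factor. -/
def RelPrime {R : Type*} [CommRing R] (G H : R) : Prop :=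
  ∀ d : R, d ∣ G → d ∣ H → IsUnit d

namespace Mset

variable {n m : ℕ} {ξ : Fin m → Fin n → ℕ} {c : Fin n → ℤ}

theorem add {z₁ z₂ : Fin m → ℕ} (h₁ : Mset ξ c z₁) (h₂ : Mset ξ c z₂) :
    Mset ξ c (z₁ + z₂) := by
  obtain ⟨α₁, hw₁, hpos₁⟩ := h₁
  obtain ⟨α₂, hw₂, hpos₂⟩ := h₂
  refine ⟨α₁ + α₂, fun j => ?_, fun η hη hc => ?_⟩
  · simp only [Pi.add_apply, mul_add, sum_add_distrib, hw₁ j, hw₂ j]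
    push_cast
    rfl
  · simp only [Pi.add_apply, Int.cast_add, mul_add, sum_add_distrib]
    exact add_nonneg (hpos₁ η hη hc) (hpos₂ η hη hc)

theorem of_wtF_eq {w : Fin m → ℕ} (α : Fin n →₀ ℕ) (hα : wtF ξ α = w) : Mset ξ c w := by
  refine ⟨fun i => (α i : ℤ), fun j => ?_, fun η hη _ => ?_⟩
  · rw [← hα, wtF]
    push_cast
    rfl
  · exact sum_nonneg fun i _ => mul_nonneg (hη i) (by positivity)

end Mset

theorem exists_wtF_eq_of_finrank_Rw_pos (K : Type*) [Field K] {n m : ℕ}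
    {ξ : Fin m → Fin n → ℕ} {w : Fin m → ℕ} (hw : 0 < Module.finrank K (Rw K ξ w)) :
    ∃ α : Fin n →₀ ℕ, wtF ξ α = w := by
  by_contra! hnone
  have hspan : Rw K ξ w = ⊥ := by
    rw [Rw, Submodule.span_eq_bot]
    rintro p ⟨α, hα, -⟩
    exact absurd hα (hnone α)
  rw [hspan, finrank_bot] at hw
  exact hw.false

theorem Mset_addClosed_and_mem_general (K : Type*) [Field K] {n : ℕ}
    (c : Fin n → ℤ)
    (ξ : Fin (n-1) → Fin n → ℕ) :
    (∀ z₁ z₂ : Fin (n-1) → ℕ, Mset ξ c z₁ → Mset ξ c z₂ → Mset ξ c (z₁ + z₂)) ∧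
    (∀ w : Fin (n-1) → ℕ, 0 < Module.finrank K (Rw K ξ w) → Mset ξ c w) := by
  refine ⟨fun _ _ => Mset.add, fun w hw => ?_⟩
  obtain ⟨α, hα⟩ := exists_wtF_eq_of_finrank_Rw_pos K hw
  exact Mset.of_wtF_eq α hα

/-- `M` is closed under addition, and every weight `w` with
`dim R_w > 0` belongs to `M`. -/
theorem Mset_addClosed_and_mem (K : Type*) [Field K] {n : ℕ} (Δ E : Set (Fin n → ℝ))
    (hΔ : IsNewtonPolyhedron Δ) (hE : IsLooseEdge Δ E)
    (c : Fin n → ℤ) (hprim : IsPrimitiveVec c) (hpar : ParallelTo E c)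
    (ξ : Fin (n-1) → Fin n → ℕ) (horth : OrthSetup ξ c) :
    (∀ z₁ z₂ : Fin (n-1) → ℕ, Mset ξ c z₁ → Mset ξ c z₂ → Mset ξ c (z₁ + z₂)) ∧
    (∀ w : Fin (n-1) → ℕ, 0 < Module.finrank K (Rw K ξ w) → Mset ξ c w) :=
  Mset_addClosed_and_mem_general K c ξ
end

section
/- With the grading of K[x_1,…,x_n][y] associated to a descendant loose edge E and R'_w = R_w ∩ K[x_1,…,x_n]: for every w ∈ M, z ∈ ℤ_{≥0}^n, every nonzero monomial H ∈ R'_z, and every ψ ∈ R'_{w+z}, the quotient ψ/H lies in R'_w; in particular ψ/H is a monomial with nonnegative exponents when ψ is a monomial. -/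
open Finset

/-- `R'_w = R_w ∩ K[x_1,…,x_n]`: span of monomials of weight `w` not involving `y`. -/
noncomputable def Rw' (K : Type*) [Field K] {n : ℕ} (ξ : Fin n → Fin (n+1) → ℕ)
    (w : Fin n → ℕ) : Submodule K (MvPolynomial (Fin (n+1)) K) :=
  Submodule.span K {p | ∃ α : Fin (n+1) →₀ ℕ, wtF ξ α = w ∧ α (Fin.last n) = 0 ∧
    p = MvPolynomial.monomial α (1 : K)}

/-- A descendant direction: nonnegative in the `x`-coordinates and negative in `y`. -/
def DescendantDir {n : ℕ} (c : Fin (n+1) → ℤ) : Prop :=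
  (∀ i : Fin (n+1), (i : ℕ) < n → 0 ≤ c i) ∧ c (Fin.last n) < 0


/-! If `x^β` has weight `w + z` and `x^α` has weight `z`, then `β - α - α'` lies in the common
kernel of the `ξ_j` for any integral `α'` of weight `w`; that kernel is the line `ℝ c`, so `β - α`
and `α'` pair equally with every `η ⟂ c`. When `α'` witnesses `w ∈ M`, pairing with the nonnegative
vectors `v_i = e_i - (c_i / c_{n+1}) e_{n+1} ⟂ c`, which read off the `i`-th coordinate of
exponents free of `y`, gives `β_i ≥ α_i`. So `x^α ∣ x^β`, with quotient in `R'_w`. -/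

open Module Matrix

theorem Matrix.ker_mulVecLin_eq_span_singleton {K m n : Type*} [Field K] [Fintype m] [Fintype n]
    {A : Matrix m n K} (hA : LinearIndependent K A) (hcard : Fintype.card n = Fintype.card m + 1)
    {c : n → K} (hc : c ≠ 0) (hAc : A *ᵥ c = 0) :
    LinearMap.ker A.mulVecLin = K ∙ c := by
  have hrank : A.rank = Fintype.card m := by
    rw [A.rank_eq_finrank_span_row, finrank_span_eq_card (b := A.row) hA]
  have hker : finrank K (LinearMap.ker A.mulVecLin) = 1 := by
    have := A.mulVecLin.finrank_range_add_finrank_ker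
    rw [← Matrix.rank, hrank, finrank_fintype_fun_eq_card, hcard] at this
    omega
  refine (Submodule.eq_of_le_of_finrank_eq ?_ ?_).symm
  · exact (Submodule.span_singleton_le_iff_mem _ _).mpr hAc
  · rw [finrank_span_singleton hc, hker]

theorem Matrix.dotProduct_eq_of_mulVec_eq {K m n : Type*} [Field K] [Fintype m] [Fintype n]
    {A : Matrix m n K} (hA : LinearIndependent K A) (hcard : Fintype.card n = Fintype.card m + 1)
    {c : n → K} (hc : c ≠ 0) (hAc : A *ᵥ c = 0) {u v η : n → K} (huv : A *ᵥ u = A *ᵥ v)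
    (hη : η ⬝ᵥ c = 0) : η ⬝ᵥ u = η ⬝ᵥ v := by
  have huv_ker : u - v ∈ LinearMap.ker A.mulVecLin := by
    simp [Matrix.mulVec_sub, huv]
  obtain ⟨t, ht⟩ := Submodule.mem_span_singleton.mp
    (A.ker_mulVecLin_eq_span_singleton hA hcard hc hAc ▸ huv_ker)
  rw [← sub_eq_zero, ← dotProduct_sub, ← ht, dotProduct_smul, hη, smul_zero]

theorem wtF_add {n m : ℕ} (ξ : Fin m → Fin n → ℕ) (α β : Fin n →₀ ℕ) :
    wtF ξ (α + β) = wtF ξ α + wtF ξ β := by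
  ext j
  simp [wtF, mul_add, Finset.sum_add_distrib]

theorem mulVec_cast_eq_wtF {n m : ℕ} (ξ : Fin m → Fin n → ℕ) (α : Fin n →₀ ℕ) :
    (fun j i => (ξ j i : ℝ)) *ᵥ (fun i => (α i : ℝ)) = fun j => (wtF ξ α j : ℝ) := by
  ext j
  simp [wtF, mulVec, dotProduct]

theorem DescendantDir.exists_nonneg_orthogonal {n : ℕ} {c : Fin (n+1) → ℤ}
    (hc : DescendantDir c) {i : Fin (n+1)} (hi : i ≠ Fin.last n) :
    ∃ η : Fin (n+1) → ℝ, 0 ≤ η ∧ η ⬝ᵥ (fun k => (c k : ℝ)) = 0 ∧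
      ∀ x : Fin (n+1) → ℝ, x (Fin.last n) = 0 → η ⬝ᵥ x = x i := by
  have hci : (0 : ℝ) ≤ c i := by exact_mod_cast hc.1 i (Fin.val_lt_last hi)
  have hlast : (c (Fin.last n) : ℝ) < 0 := by exact_mod_cast hc.2
  refine ⟨Pi.single i 1 + Pi.single (Fin.last n) (-(c i : ℝ) / c (Fin.last n)), ?_, ?_, ?_⟩
  · refine add_nonneg (Pi.single_nonneg.mpr zero_le_one) (Pi.single_nonneg.mpr ?_)
    exact div_nonneg_of_nonpos (neg_nonpos.mpr hci) hlast.le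
  · rw [add_dotProduct, single_dotProduct, single_dotProduct, div_mul_cancel₀ _ hlast.ne]
    ring
  · intro x hx
    rw [add_dotProduct, single_dotProduct, single_dotProduct, hx]
    ring

theorem le_of_wtF_eq_add {n : ℕ} {c : Fin (n+1) → ℤ} (hdesc : DescendantDir c)
    {ξ : Fin n → Fin (n+1) → ℕ} (horth : OrthSetup ξ c) {w z : Fin n → ℕ} (hw : Mset ξ c w)
    {α β : Fin (n+1) →₀ ℕ} (hα : wtF ξ α = z) (hαy : α (Fin.last n) = 0)
    (hβ : wtF ξ β = w + z) (hβy : β (Fin.last n) = 0) : α ≤ β := by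
  obtain ⟨α', hα'w, hα'pos⟩ := hw
  set A : Matrix (Fin n) (Fin (n+1)) ℝ := fun j i => (ξ j i : ℝ)
  set cR : Fin (n+1) → ℝ := fun i => (c i : ℝ)
  have hcR : cR ≠ 0 := fun h => hdesc.2.ne (by simpa [cR] using congrFun h (Fin.last n))
  have hAc : A *ᵥ cR = 0 := funext fun j => by
    simpa [A, cR, mulVec, dotProduct] using congrArg (Int.cast : ℤ → ℝ) (horth.2 j)
  have hAα' : A *ᵥ (fun i => (α i : ℝ)) + A *ᵥ (fun i => (α' i : ℝ)) =
      A *ᵥ (fun i => (β i : ℝ)) := by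
    ext j
    have hα'j : (A *ᵥ fun i => (α' i : ℝ)) j = w j := by
      simpa [A, mulVec, dotProduct] using congrArg (Int.cast : ℤ → ℝ) (hα'w j)
    simp only [Pi.add_apply, hα'j, A, mulVec_cast_eq_wtF, hα, hβ]
    push_cast
    ring
  intro i
  by_cases hi : i = Fin.last n
  · simp [hi, hαy]
  obtain ⟨η, hη0, hηc, hηx⟩ := hdesc.exists_nonneg_orthogonal hi
  have hpair : η ⬝ᵥ (fun k => (β k : ℝ) - α k) = η ⬝ᵥ (fun k => (α' k : ℝ)) := by
    refine dotProduct_eq_of_mulVec_eq (A := A) horth.1 (by simp) hcR hAc ?_ hηc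
    rw [show (fun k => (β k : ℝ) - α k) = (fun k => (β k : ℝ)) - fun k => (α k : ℝ) from rfl,
      mulVec_sub, ← hAα', add_sub_cancel_left]
  have hβα : (0 : ℝ) ≤ β i - α i := by
    rw [← hηx (fun k => (β k : ℝ) - α k) (by simp [hαy, hβy]), hpair]
    exact hα'pos η hη0 hηc
  exact_mod_cast sub_nonneg.mp hβα

theorem exists_add_eq_of_wtF_eq_add {n : ℕ} {c : Fin (n+1) → ℤ} (hdesc : DescendantDir c)
    {ξ : Fin n → Fin (n+1) → ℕ} (horth : OrthSetup ξ c) {w z : Fin n → ℕ} (hw : Mset ξ c w)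
    {α β : Fin (n+1) →₀ ℕ} (hα : wtF ξ α = z) (hαy : α (Fin.last n) = 0)
    (hβ : wtF ξ β = w + z) (hβy : β (Fin.last n) = 0) :
    ∃ δ : Fin (n+1) →₀ ℕ, wtF ξ δ = w ∧ δ (Fin.last n) = 0 ∧ β = α + δ := by
  have hαβ := le_of_wtF_eq_add hdesc horth hw hα hαy hβ hβy
  have hβ_eq : β = α + (β - α) := (add_tsub_cancel_of_le hαβ).symm
  refine ⟨β - α, ?_, by simp [hαy, hβy], hβ_eq⟩
  have hsum := wtF_add ξ α (β - α)
  rw [← hβ_eq, hβ, hα] at hsum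
  exact (add_right_cancel (hsum.trans (add_comm _ _))).symm

theorem monomial_divides_Rw'_general (K : Type*) [Field K] {n : ℕ}
    (c : Fin (n+1) → ℤ)
    (hdesc : DescendantDir c)
    (ξ : Fin n → Fin (n+1) → ℕ) (horth : OrthSetup ξ c)
    (w z : Fin n → ℕ) (hw : Mset ξ c w)
    (k : K) (hk : k ≠ 0) (α : Fin (n+1) →₀ ℕ)
    (hα : wtF ξ α = z) (hαy : α (Fin.last n) = 0) :
    ∀ ψ ∈ Rw' K ξ (w + z), ∃ φ ∈ Rw' K ξ w,
      ψ = (MvPolynomial.monomial α k) * φ := by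
  suffices h : Rw' K ξ (w + z) ≤
      (Rw' K ξ w).map (LinearMap.mulLeft K (MvPolynomial.monomial α k)) by
    intro ψ hψ
    obtain ⟨φ, hφ, rfl⟩ := h hψ
    exact ⟨φ, hφ, rfl⟩
  refine Submodule.span_le.mpr ?_
  rintro _ ⟨β, hβ, hβy, rfl⟩
  obtain ⟨δ, hδ, hδy, rfl⟩ := exists_add_eq_of_wtF_eq_add hdesc horth hw hα hαy hβ hβy
  refine ⟨k⁻¹ • MvPolynomial.monomial δ 1,
    Submodule.smul_mem _ _ (Submodule.subset_span ⟨δ, hδ, hδy, rfl⟩), ?_⟩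
  simp [MvPolynomial.smul_monomial, MvPolynomial.monomial_mul, hk]

/-- for `w ∈ M`, a nonzero monomial `H ∈ R'_z` divides every
`ψ ∈ R'_{w+z}`, with quotient in `R'_w`. -/
theorem monomial_divides_Rw' (K : Type*) [Field K] {n : ℕ} (Δ E : Set (Fin (n+1) → ℝ))
    (hΔ : IsNewtonPolyhedron Δ) (hE : IsLooseEdge Δ E)
    (c : Fin (n+1) → ℤ) (hprim : IsPrimitiveVec c) (hpar : ParallelTo E c)
    (hdesc : DescendantDir c)
    (ξ : Fin n → Fin (n+1) → ℕ) (horth : OrthSetup ξ c)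
    (w z : Fin n → ℕ) (hw : Mset ξ c w)
    (k : K) (hk : k ≠ 0) (α : Fin (n+1) →₀ ℕ)
    (hα : wtF ξ α = z) (hαy : α (Fin.last n) = 0) :
    ∀ ψ ∈ Rw' K ξ (w + z), ∃ φ ∈ Rw' K ξ w,
      ψ = (MvPolynomial.monomial α k) * φ :=
  monomial_divides_Rw'_general K c hdesc ξ horth w z hw k hk α hα hαy
end

section
/- Let G ∈ R_w and H ∈ R_z be coprime homogeneous polynomials in the grading of K[x_1,…,x_n][y] associated to a descendant loose edge, with z ∈ M. If G is monic with respect to y (in the special case G = y and H ∈ R'_z), then for every i ∈ M one has G·R_{z+i} + H·R_{w+i} = R_{w+z+i}. -/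
open Finset

/-- `G` is monic with respect to the last variable `y`. -/
def MonicInY {K : Type*} [CommSemiring K] {n : ℕ} (G : MvPolynomial (Fin (n+1)) K) : Prop :=
  ∃ d : ℕ, MvPolynomial.coeff (Finsupp.single (Fin.last n) d) G = 1 ∧
    ∀ α ∈ G.support, α (Fin.last n) ≤ d ∧
      (α (Fin.last n) = d → α = Finsupp.single (Fin.last n) d)

/-!
The sum `G·R_{z+i} + H·R_{w+i}` lies in `R_{w+z+i}`, and as `G` and `H` are coprime the two
summands meet exactly in `GH·R_i`. Equality therefore reduces to the dimension count
`dim R_{z+i} + dim R_{w+i} = dim R_{w+z+i} + dim R_i`.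

The monomials of weight `v` are the lattice points `β + k c ≥ 0` of a line parallel to `c`. Some
`c_j` is positive (otherwise the face containing `E` would contain a vertical ray), so these points
form an interval `ℓ ≤ k ≤ ⌊β_y / e⌋`, `e = -c_y`, and membership in `M` keeps its length
nonnegative. Multiplication by the leading term `y^d` of `G` moves the upper end by `d` and fixes
the lower one. Since `y` is not a common factor, `G` or `H` has a `y`-free monomial, which means
`e ∣ d` or `e ∣ β_y` on the line of weight `z`; either way the floors add up.
-/

open MvPolynomial

section WeightedGrading

variable {K R σ M : Type*} {w : σ → M}

attribute [local instance] weightedGradedAlgebra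

lemma MvPolynomial.weightedHomogeneousComponent_mul_of_left [CommRing R]
    [AddCancelCommMonoid M] {H : MvPolynomial σ R} {z : M} (hH : H.IsWeightedHomogeneous w z)
    (h : MvPolynomial σ R) (v : M) :
    weightedHomogeneousComponent w (z + v) (H * h) = H * weightedHomogeneousComponent w v h := by
  classical
  simpa [← weightedDecomposition.decompose'_apply] using
    DirectSum.coe_decompose_mul_add_of_left_mem (weightedHomogeneousSubmodule R w) hH (b := h)
      (j := v)

lemma MvPolynomial.IsWeightedHomogeneous.of_mul_left [CommRing R] [IsDomain R]
    [AddCancelCommMonoid M] {H h : MvPolynomial σ R} {z i : M}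
    (hH : H.IsWeightedHomogeneous w z) (hH0 : H ≠ 0)
    (hHh : (H * h).IsWeightedHomogeneous w (z + i)) : h.IsWeightedHomogeneous w i := by
  classical
  intro d hd
  by_contra hdi
  have hcomp : weightedHomogeneousComponent w (Finsupp.weight w d) h ≠ 0 := fun h0 =>
    hd (by simpa [coeff_weightedHomogeneousComponent] using congr_arg (coeff d) h0)
  refine mul_ne_zero hH0 hcomp ?_
  rw [← weightedHomogeneousComponent_mul_of_left hH]
  exact hHh.weightedHomogeneousComponent_ne _ fun h => hdi (add_left_cancel h)

lemma MvPolynomial.X_dvd_of_forall_mem_support [CommSemiring R] {p : MvPolynomial σ R} {s : σ}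
    (h : ∀ α ∈ p.support, α s ≠ 0) : X s ∣ p := by
  rw [X_dvd_iff_modMonomial_eq_zero]
  ext α
  by_cases hα : Finsupp.single s 1 ≤ α
  · simp [coeff_modMonomial_of_le _ hα]
  · rw [coeff_modMonomial_of_not_le _ hα, coeff_zero, ← notMem_support_iff]
    exact fun hmem => hα (Finsupp.single_le_iff.mpr (Nat.one_le_iff_ne_zero.mpr (h α hmem)))

lemma IsRelPrime.exists_mem_support_apply_eq_zero [CommRing R] [IsDomain R]
    {G H : MvPolynomial σ R} (hcop : IsRelPrime G H) (s : σ) :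
    (∃ α ∈ G.support, α s = 0) ∨ ∃ α ∈ H.support, α s = 0 := by
  by_contra! h
  exact X_prime.not_isUnit
    (hcop (X_dvd_of_forall_mem_support h.1) (X_dvd_of_forall_mem_support h.2))

variable [Field K]

lemma Submodule.map_mulLeft_C {r : K} (hr : r ≠ 0) (p : Submodule K (MvPolynomial σ K)) :
    p.map (LinearMap.mulLeft K (C r)) = p := by
  have : LinearMap.mulLeft K (C r : MvPolynomial σ K) = r • LinearMap.id :=
    LinearMap.ext fun _ => C_mul'
  rw [this, Submodule.map_smul _ _ _ hr, Submodule.map_id]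

lemma finrank_map_mulLeft {G : MvPolynomial σ K} (hG0 : G ≠ 0)
    (p : Submodule K (MvPolynomial σ K)) :
    Module.finrank K (p.map (LinearMap.mulLeft K G)) = Module.finrank K p :=
  (Submodule.equivMapOfInjective _ (mul_right_injective₀ hG0) p).finrank_eq.symm

variable [AddCommMonoid M]

local notation "𝓦" => weightedHomogeneousSubmodule K w

variable (K w) in
noncomputable def weightedHomogeneousSubmoduleEquivFinsupp (m : M) :
    𝓦 m ≃ₗ[K] ({d : σ →₀ ℕ | Finsupp.weight w d = m} →₀ K) :=
  (LinearEquiv.ofEq _ _ (weightedHomogeneousSubmodule_eq_finsupp_supported K w m)).trans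
    (AddMonoidAlgebra.supportedEquivFinsupp _)

lemma finrank_weightedHomogeneousSubmodule (m : M) :
    Module.finrank K (𝓦 m) = {d : σ →₀ ℕ | Finsupp.weight w d = m}.ncard := by
  rw [(weightedHomogeneousSubmoduleEquivFinsupp K w m).finrank_eq, Module.finrank,
    rank_finsupp_self, Cardinal.toNat_lift, ← Nat.card_coe_set_eq]
  rfl

lemma finiteDimensional_weightedHomogeneousSubmodule {m : M}
    (hfin : {d : σ →₀ ℕ | Finsupp.weight w d = m}.Finite) : FiniteDimensional K (𝓦 m) :=
  have := hfin.fintype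
  (weightedHomogeneousSubmoduleEquivFinsupp K w m).symm.finiteDimensional

end WeightedGrading

section ProductsOfCoprimeForms

variable {K σ M : Type*} [Field K] [AddCancelCommMonoid M] {w : σ → M}
  {G H : MvPolynomial σ K} {u z i : M}

local notation "𝓦" => weightedHomogeneousSubmodule K w

lemma map_mulLeft_inf_map_mulLeft (hG : G ∈ 𝓦 u) (hH : H ∈ 𝓦 z) (hH0 : H ≠ 0)
    (hcop : IsRelPrime G H) :
    (𝓦 (z + i)).map (LinearMap.mulLeft K G) ⊓ (𝓦 (u + i)).map (LinearMap.mulLeft K H) =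
      (𝓦 i).map (LinearMap.mulLeft K (G * H)) := by
  refine le_antisymm ?_ ?_
  · rintro _ ⟨⟨φ, hφ, rfl⟩, ψ, -, hψ⟩
    obtain ⟨h, rfl⟩ := hcop.symm.dvd_of_dvd_mul_left ⟨ψ, hψ.symm⟩
    exact ⟨h, IsWeightedHomogeneous.of_mul_left hH hH0 hφ, by simp⟩
  · rintro _ ⟨h, hh, rfl⟩
    exact ⟨⟨H * h, hH.mul hh, by simp⟩, G * h, hG.mul hh, by simp [mul_left_comm]⟩

lemma map_mulLeft_sup_map_mulLeft_le (hG : G ∈ 𝓦 u) (hH : H ∈ 𝓦 z) :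
    (𝓦 (z + i)).map (LinearMap.mulLeft K G) ⊔ (𝓦 (u + i)).map (LinearMap.mulLeft K H) ≤
      𝓦 (u + z + i) := by
  refine sup_le ?_ ?_ <;> rintro _ ⟨φ, hφ, rfl⟩
  · simpa [add_assoc] using hG.mul hφ
  · simpa [add_assoc, add_left_comm] using hH.mul hφ

theorem map_mulLeft_sup_map_mulLeft_eq (hG : G ∈ 𝓦 u) (hH : H ∈ 𝓦 z) (hG0 : G ≠ 0)
    (hH0 : H ≠ 0) (hcop : IsRelPrime G H) (hfin : FiniteDimensional K (𝓦 (u + z + i)))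
    (hdim : Module.finrank K (𝓦 (z + i)) + Module.finrank K (𝓦 (u + i)) =
      Module.finrank K (𝓦 (u + z + i)) + Module.finrank K (𝓦 i)) :
    (𝓦 (z + i)).map (LinearMap.mulLeft K G) ⊔ (𝓦 (u + i)).map (LinearMap.mulLeft K H) =
      𝓦 (u + z + i) := by
  have hle := map_mulLeft_sup_map_mulLeft_le (i := i) hG hH
  have : FiniteDimensional K ((𝓦 (z + i)).map (LinearMap.mulLeft K G)) :=
    Submodule.finiteDimensional_of_le (le_sup_left.trans hle)
  have : FiniteDimensional K ((𝓦 (u + i)).map (LinearMap.mulLeft K H)) :=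
    Submodule.finiteDimensional_of_le (le_sup_right.trans hle)
  refine Submodule.eq_of_le_of_finrank_le hle ?_
  have := Submodule.finrank_sup_add_finrank_inf_eq
    ((𝓦 (z + i)).map (LinearMap.mulLeft K G)) ((𝓦 (u + i)).map (LinearMap.mulLeft K H))
  rw [map_mulLeft_inf_map_mulLeft hG hH hH0 hcop, finrank_map_mulLeft hG0,
    finrank_map_mulLeft hH0, finrank_map_mulLeft (mul_ne_zero hG0 hH0)] at this
  omega

end ProductsOfCoprimeForms

lemma wtF_eq_weight {N m : ℕ} (ξ : Fin m → Fin N → ℕ) (α : Fin N →₀ ℕ) :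
    wtF ξ α = Finsupp.weight (Function.swap ξ) α := by
  ext j
  simp [wtF, Finsupp.weight_apply, Finsupp.sum_fintype, mul_comm]

lemma Rw_eq_weightedHomogeneousSubmodule (K : Type*) [Field K] {N m : ℕ}
    (ξ : Fin m → Fin N → ℕ) (v : Fin m → ℕ) :
    Rw K ξ v = weightedHomogeneousSubmodule K (Function.swap ξ) v := by
  refine le_antisymm (Submodule.span_le.mpr ?_) fun p hp => ?_
  · rintro _ ⟨α, hα, rfl⟩
    exact isWeightedHomogeneous_monomial _ _ _ (by rw [← wtF_eq_weight, hα])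
  · induction hp using IsWeightedHomogeneous.induction_on with
    | zero => exact zero_mem _
    | add p q _ _ hp hq => exact add_mem hp hq
    | monomial α r hα =>
      rw [← mul_one r, ← smul_eq_mul, ← smul_monomial]
      exact Submodule.smul_mem _ _ (Submodule.subset_span ⟨α, by rw [wtF_eq_weight, hα], rfl⟩)

lemma wtF_eq_of_mem_Rw {K : Type*} [Field K] {N m : ℕ} {ξ : Fin m → Fin N → ℕ} {v : Fin m → ℕ}
    {P : MvPolynomial (Fin N) K} (hP : P ∈ Rw K ξ v) {α : Fin N →₀ ℕ} (hα : α ∈ P.support) :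
    wtF ξ α = v := by
  rw [Rw_eq_weightedHomogeneousSubmodule] at hP
  rw [wtF_eq_weight]
  exact hP (mem_support_iff.mp hα)

section LatticeLine

def intWt {m N : ℕ} (ξ : Fin m → Fin N → ℕ) : (Fin N → ℤ) →+ (Fin m → ℤ) :=
  (Matrix.of fun j i => (ξ j i : ℤ)).mulVecLin.toAddMonoidHom

lemma intWt_apply {m N : ℕ} (ξ : Fin m → Fin N → ℕ) (β : Fin N → ℤ) :
    intWt ξ β = fun j => ∑ i, (ξ j i : ℤ) * β i := rfl

lemma intWt_natCast {m N : ℕ} (ξ : Fin m → Fin N → ℕ) (α : Fin N →₀ ℕ) :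
    intWt ξ (fun i => (α i : ℤ)) = fun j => (wtF ξ α j : ℤ) := by
  ext j
  simp [intWt_apply, wtF]

lemma intWt_add_eq {m N : ℕ} {ξ : Fin m → Fin N → ℕ} {β γ : Fin N → ℤ} {u v : Fin m → ℕ}
    (hβ : intWt ξ β = fun j => (u j : ℤ)) (hγ : intWt ξ γ = fun j => (v j : ℤ)) :
    intWt ξ (β + γ) = fun j => ((u + v) j : ℤ) := by
  rw [map_add, hβ, hγ]
  ext
  simp

lemma IsPrimitiveVec.ne_zero {N : ℕ} {c : Fin N → ℤ} (hprim : IsPrimitiveVec c) : c ≠ 0 := by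
  rintro rfl
  rw [IsPrimitiveVec, Finset.gcd_eq_zero_iff.mpr fun _ _ => by simp] at hprim
  exact zero_ne_one hprim

lemma IsPrimitiveVec.exists_sum_mul_eq_one {N : ℕ} {c : Fin N → ℤ} (hprim : IsPrimitiveVec c) :
    ∃ μ : Fin N → ℤ, ∑ i, c i * μ i = 1 := by
  obtain ⟨μ, hμ⟩ := Finset.gcd_eq_sum_mul univ c
  have hunit : IsUnit (univ.gcd c) := by
    refine Int.isUnit_iff_natAbs_eq.mpr (Nat.dvd_one.mp (hprim ▸ Finset.dvd_gcd fun i _ => ?_))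
    exact Int.natAbs_dvd_natAbs.mpr (Finset.gcd_dvd (mem_univ i))
  obtain ⟨u, hu⟩ := hunit.exists_right_inv
  exact ⟨fun i => μ i * u, by simp_rw [← mul_assoc, ← Finset.sum_mul, ← hμ, hu]⟩

lemma IsPrimitiveVec.exists_eq_zsmul_of_cast_eq_mul {N : ℕ} {c δ : Fin N → ℤ}
    (hprim : IsPrimitiveVec c) {t : ℝ} (h : ∀ i, (δ i : ℝ) = t * c i) : ∃ k : ℤ, δ = k • c := by
  obtain ⟨μ, hμ⟩ := hprim.exists_sum_mul_eq_one
  have ht : ((∑ i, δ i * μ i : ℤ) : ℝ) = t := by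
    have : ((∑ i, c i * μ i : ℤ) : ℝ) = 1 := by exact_mod_cast hμ
    push_cast at this ⊢
    simp_rw [h, mul_assoc, ← Finset.mul_sum, this, mul_one]
  refine ⟨∑ i, δ i * μ i, funext fun i => ?_⟩
  have : (δ i : ℝ) = ((∑ i, δ i * μ i : ℤ) : ℝ) * c i := by rw [ht, h]
  simpa using (by exact_mod_cast this : δ i = (∑ i, δ i * μ i) * c i)

variable {n : ℕ} {ξ : Fin n → Fin (n+1) → ℕ} {c : Fin (n+1) → ℤ}

lemma OrthSetup.exists_mul_of_intWt_eq_zero (horth : OrthSetup ξ c) (hc : c ≠ 0)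
    {δ : Fin (n+1) → ℤ} (hδ : intWt ξ δ = 0) : ∃ t : ℝ, ∀ i, (δ i : ℝ) = t * c i := by
  set A : Matrix (Fin n) (Fin (n+1)) ℝ := Matrix.of fun j i => (ξ j i : ℝ)
  have hmem : ∀ β : Fin (n+1) → ℤ, intWt ξ β = 0 →
      (fun i => (β i : ℝ)) ∈ LinearMap.ker A.mulVecLin := fun β hβ => by
    ext j
    simpa [A, Matrix.mulVec, dotProduct, intWt_apply] using
      congr_arg (fun v : Fin n → ℤ => (v j : ℝ)) hβ
  have hker : Module.finrank ℝ (LinearMap.ker A.mulVecLin) = 1 := by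
    have hrank : A.rank = n := by simpa using LinearIndependent.rank_matrix (M := A) horth.1
    have := LinearMap.finrank_range_add_finrank_ker A.mulVecLin
    rw [← Matrix.rank, hrank, Module.finrank_fin_fun] at this
    omega
  have hcR : (⟨_, hmem c (funext horth.2)⟩ : LinearMap.ker A.mulVecLin) ≠ 0 := fun h0 =>
    hc (funext fun i => by simpa using congr_fun (congr_arg Subtype.val h0) i)
  obtain ⟨t, ht⟩ := (finrank_eq_one_iff_of_nonzero' _ hcR).mp hker ⟨_, hmem δ hδ⟩
  exact ⟨t, fun i => (congr_fun (congr_arg Subtype.val ht) i).symm⟩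

lemma OrthSetup.exists_eq_add_zsmul_of_intWt_eq (horth : OrthSetup ξ c)
    (hprim : IsPrimitiveVec c) {β γ : Fin (n+1) → ℤ} (h : intWt ξ β = intWt ξ γ) :
    ∃ k : ℤ, γ = β + k • c := by
  obtain ⟨t, ht⟩ := horth.exists_mul_of_intWt_eq_zero hprim.ne_zero
    (δ := γ - β) (by rw [map_sub, h, sub_self])
  obtain ⟨k, hk⟩ := hprim.exists_eq_zsmul_of_cast_eq_mul (δ := γ - β) (by simpa using ht)
  exact ⟨k, by rw [← hk, add_sub_cancel]⟩

lemma OrthSetup.neg_last_dvd_of_wtF_eq (horth : OrthSetup ξ c) (hprim : IsPrimitiveVec c)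
    {v : Fin n → ℕ} {β : Fin (n+1) → ℤ} (hβv : intWt ξ β = fun j => (v j : ℤ))
    {α : Fin (n+1) →₀ ℕ} (hα : wtF ξ α = v) (hα0 : α (Fin.last n) = 0) :
    -c (Fin.last n) ∣ β (Fin.last n) := by
  obtain ⟨k, hk⟩ := horth.exists_eq_add_zsmul_of_intWt_eq hprim
    (hβv.trans (hα ▸ intWt_natCast ξ α).symm)
  have := congr_fun hk (Fin.last n)
  simp only [hα0, Nat.cast_zero, Pi.add_apply, Pi.smul_apply, smul_eq_mul] at this
  exact ⟨k, by linarith⟩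

def IsLowerEndpoint (c β : Fin (n+1) → ℤ) (lo : ℤ) : Prop :=
  ∀ k, lo ≤ k ↔ ∀ j, 0 < c j → 0 ≤ β j + k * c j

lemma exists_isLowerEndpoint (hpos : ∃ j, 0 < c j) (β : Fin (n+1) → ℤ) :
    ∃ lo, IsLowerEndpoint c β lo := by
  classical
  obtain ⟨j₀, hj₀⟩ := hpos
  have hP : (univ.filter (0 < c ·)).Nonempty := ⟨j₀, Finset.mem_filter.mpr ⟨mem_univ _, hj₀⟩⟩
  refine ⟨(univ.filter (0 < c ·)).sup' hP fun j => -(β j / c j), fun k => ?_⟩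
  rw [Finset.sup'_le_iff]
  simp only [Finset.mem_filter, Finset.mem_univ, true_and]
  refine forall₂_congr fun j hj => ?_
  rw [neg_le, Int.le_ediv_iff_mul_le hj]
  constructor <;> intro h <;> linarith

lemma DescendantDir.eq_last_of_neg (hdesc : DescendantDir c) {i : Fin (n+1)} (hi : c i < 0) :
    i = Fin.last n :=
  Fin.eq_last_of_not_lt fun h => (hdesc.1 i h).not_gt hi

lemma DescendantDir.ne_last_of_pos (hdesc : DescendantDir c) {j : Fin (n+1)} (hj : 0 < c j) :
    j ≠ Fin.last n :=
  fun h => (h ▸ hj).not_gt hdesc.2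

lemma IsLowerEndpoint.single_add (hdesc : DescendantDir c) {β : Fin (n+1) → ℤ} {lo : ℤ}
    (hlo : IsLowerEndpoint c β lo) (d : ℤ) :
    IsLowerEndpoint c (Pi.single (Fin.last n) d + β) lo := fun k => by
  rw [hlo]
  refine forall₂_congr fun j hj => ?_
  simp [hdesc.ne_last_of_pos hj]

lemma DescendantDir.nonneg_add_mul_iff_mem_Icc (hdesc : DescendantDir c) {β : Fin (n+1) → ℤ}
    (hβ0 : ∀ i, c i = 0 → 0 ≤ β i) {lo : ℤ} (hlo : IsLowerEndpoint c β lo) (k : ℤ) :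
    (∀ i, 0 ≤ β i + k * c i) ↔ k ∈ Set.Icc lo (β (Fin.last n) / -c (Fin.last n)) := by
  have he : 0 < -c (Fin.last n) := neg_pos.mpr hdesc.2
  rw [Set.mem_Icc, hlo, Int.le_ediv_iff_mul_le he]
  refine ⟨fun h => ⟨fun j _ => h j, by linarith [h (Fin.last n)]⟩, fun ⟨hpos, hlast⟩ i => ?_⟩
  rcases lt_trichotomy (c i) 0 with hi | hi | hi
  · rw [hdesc.eq_last_of_neg hi]; linarith
  · simpa [hi] using hβ0 i hi
  · exact hpos i hi

lemma ncard_setOf_wtF_eq_toNat (horth : OrthSetup ξ c) (hprim : IsPrimitiveVec c)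
    (hdesc : DescendantDir c) {v : Fin n → ℕ} {β : Fin (n+1) → ℤ}
    (hβ : intWt ξ β = fun j => (v j : ℤ)) (hβ0 : ∀ i, c i = 0 → 0 ≤ β i) {lo : ℤ}
    (hlo : IsLowerEndpoint c β lo) :
    {α | wtF ξ α = v}.Finite ∧
      {α | wtF ξ α = v}.ncard = (β (Fin.last n) / -c (Fin.last n) + 1 - lo).toNat := by
  set I := Set.Icc lo (β (Fin.last n) / -c (Fin.last n)) with hI
  set f : ℤ → (Fin (n+1) →₀ ℕ) :=
    fun k => Finsupp.equivFunOnFinite.symm fun i => (β i + k * c i).toNat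
  have hf : ∀ k ∈ I, ∀ i, (f k i : ℤ) = β i + k * c i :=
    fun k hk i => Int.toNat_of_nonneg ((hdesc.nonneg_add_mul_iff_mem_Icc hβ0 hlo k).mpr hk i)
  have himage : {α | wtF ξ α = v} = f '' I := by
    ext α
    constructor
    · intro hα
      obtain ⟨k, hk⟩ := horth.exists_eq_add_zsmul_of_intWt_eq hprim
        (hβ.trans (hα ▸ intWt_natCast ξ α).symm)
      have hk' : ∀ i, (α i : ℤ) = β i + k * c i := fun i => by simpa using congr_fun hk i
      have hmem := (hdesc.nonneg_add_mul_iff_mem_Icc hβ0 hlo k).mp fun i => hk' i ▸ Int.natCast_nonneg _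
      exact ⟨k, hmem, Finsupp.ext fun i => by exact_mod_cast (hf k hmem i).trans (hk' i).symm⟩
    · rintro ⟨k, hk, rfl⟩
      have : intWt ξ (fun i => (f k i : ℤ)) = intWt ξ β := by
        rw [show (fun i => (f k i : ℤ)) = β + k • c from funext (hf k hk), map_add, map_zsmul,
          show intWt ξ c = 0 from funext horth.2, smul_zero, add_zero]
      funext j
      exact_mod_cast congr_fun ((intWt_natCast ξ _).symm.trans (this.trans hβ)) j
  have hinj : Set.InjOn f I := fun k hk k' hk' h => by
    have := congr_arg (fun α => (α (Fin.last n) : ℤ)) h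
    simp only [hf k hk, hf k' hk'] at this
    exact mul_right_cancel₀ hdesc.2.ne (by linarith)
  rw [himage, hinj.ncard_image, hI, ← Finset.coe_Icc, Set.ncard_coe_finset, Int.card_Icc]
  exact ⟨(Finset.Icc _ _).finite_toSet.image f, rfl⟩

/-- The point of the line `β + ℝ c` with vanishing last coordinate lies in the nonnegative
orthant. -/
def IsAdmissible (c β : Fin (n+1) → ℤ) : Prop :=
  (∀ i, c i = 0 → 0 ≤ β i) ∧ ∀ j, 0 < c j → 0 ≤ -c (Fin.last n) * β j + c j * β (Fin.last n)

lemma IsAdmissible.add {β γ : Fin (n+1) → ℤ} (hβ : IsAdmissible c β) (hγ : IsAdmissible c γ) :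
    IsAdmissible c (β + γ) :=
  ⟨fun i hi => add_nonneg (hβ.1 i hi) (hγ.1 i hi), fun j hj => by
    simpa [mul_add, add_add_add_comm] using add_nonneg (hβ.2 j hj) (hγ.2 j hj)⟩

lemma isAdmissible_single (d : ℕ) : IsAdmissible c (Pi.single (Fin.last n) (d : ℤ)) := by
  refine ⟨fun i _ => ?_, fun j hj => ?_⟩
  · rcases eq_or_ne i (Fin.last n) with rfl | hi <;> simp [*]
  · rcases eq_or_ne j (Fin.last n) with rfl | hj' <;> simp [*]

lemma Mset.exists_isAdmissible (hdesc : DescendantDir c) {v : Fin n → ℕ} (hv : Mset ξ c v) :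
    ∃ β, intWt ξ β = (fun j => (v j : ℤ)) ∧ IsAdmissible c β := by
  obtain ⟨β, hβv, hdual⟩ := hv
  replace hdual : ∀ η : Fin (n+1) → ℝ, 0 ≤ η → η ⬝ᵥ (fun i => (c i : ℝ)) = 0 →
      0 ≤ η ⬝ᵥ (fun i => (β i : ℝ)) := fun η hη => hdual η hη
  refine ⟨β, funext hβv, fun i hi => ?_, fun j hj => ?_⟩
  · have := hdual (Pi.single i 1) (Pi.single_nonneg.mpr zero_le_one)
      (by simp [single_dotProduct, hi])
    rw [single_dotProduct, one_mul] at this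
    exact_mod_cast this
  · have := hdual (Pi.single j (-c (Fin.last n) : ℝ) + Pi.single (Fin.last n) (c j : ℝ))
      (add_nonneg (Pi.single_nonneg.mpr (by exact_mod_cast (neg_pos.mpr hdesc.2).le))
        (Pi.single_nonneg.mpr (by exact_mod_cast hj.le)))
      (by simp only [add_dotProduct, single_dotProduct]; ring)
    simp only [add_dotProduct, single_dotProduct] at this
    exact_mod_cast this

lemma IsAdmissible.le_of_isLowerEndpoint (hdesc : DescendantDir c) {β : Fin (n+1) → ℤ}
    (hβ : IsAdmissible c β) {lo : ℤ} (hlo : IsLowerEndpoint c β lo) :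
    lo ≤ β (Fin.last n) / -c (Fin.last n) + 1 := by
  have he : 0 < -c (Fin.last n) := neg_pos.mpr hdesc.2
  refine (hlo _).mpr fun j hj => ?_
  have h1 := Int.lt_ediv_add_one_mul_self (β (Fin.last n)) he
  have h2 := hβ.2 j hj
  nlinarith

lemma IsAdmissible.ncard_setOf_wtF_eq (horth : OrthSetup ξ c) (hprim : IsPrimitiveVec c)
    (hdesc : DescendantDir c) {β : Fin (n+1) → ℤ} (hβ : IsAdmissible c β) {v : Fin n → ℕ}
    (hβv : intWt ξ β = fun j => (v j : ℤ)) {lo : ℤ} (hlo : IsLowerEndpoint c β lo) :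
    {α | wtF ξ α = v}.Finite ∧
      ({α | wtF ξ α = v}.ncard : ℤ) = β (Fin.last n) / -c (Fin.last n) + 1 - lo := by
  obtain ⟨hfin, hcard⟩ := ncard_setOf_wtF_eq_toNat horth hprim hdesc hβv hβ.1 hlo
  refine ⟨hfin, ?_⟩
  rw [hcard, Int.toNat_of_nonneg (by linarith [hβ.le_of_isLowerEndpoint hdesc hlo])]

lemma Int.ediv_add_ediv_eq_of_dvd {e a b d : ℤ} (h : e ∣ d ∨ e ∣ a) :
    (a + b) / e + (d + b) / e = (d + (a + b)) / e + b / e := by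
  rcases eq_or_ne e 0 with rfl | he
  · simp
  rcases h with ⟨k, rfl⟩ | ⟨k, rfl⟩
  · rw [add_comm (e * k), add_comm (e * k), Int.add_mul_ediv_left _ _ he,
      Int.add_mul_ediv_left _ _ he]
    ring
  · rw [add_comm (e * k), add_left_comm, ← add_assoc, Int.add_mul_ediv_left _ _ he,
      Int.add_mul_ediv_left _ _ he, add_comm d]
    ring

theorem ncard_setOf_wtF_add_ncard_setOf_wtF (horth : OrthSetup ξ c) (hprim : IsPrimitiveVec c)
    (hdesc : DescendantDir c) (hpos : ∃ j, 0 < c j) {w z i : Fin n → ℕ} {d : ℕ}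
    (hwd : wtF ξ (Finsupp.single (Fin.last n) d) = w)
    (hfree : (∃ α, wtF ξ α = w ∧ α (Fin.last n) = 0) ∨ ∃ α, wtF ξ α = z ∧ α (Fin.last n) = 0)
    (hz : Mset ξ c z) (hi : Mset ξ c i) :
    {α | wtF ξ α = w + z + i}.Finite ∧
      {α | wtF ξ α = z + i}.ncard + {α | wtF ξ α = w + i}.ncard =
        {α | wtF ξ α = w + z + i}.ncard + {α | wtF ξ α = i}.ncard := by
  obtain ⟨βz, hβz, hadz⟩ := hz.exists_isAdmissible hdesc
  obtain ⟨βi, hβi, hadi⟩ := hi.exists_isAdmissible hdesc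
  set βw : Fin (n+1) → ℤ := Pi.single (Fin.last n) d
  have hβw : intWt ξ βw = fun j => (w j : ℤ) := by
    rw [← hwd, ← intWt_natCast]
    congr 1
    ext k
    rcases eq_or_ne k (Fin.last n) with rfl | hk <;> simp [βw, *]
  obtain ⟨loA, hloA⟩ := exists_isLowerEndpoint hpos (βz + βi)
  obtain ⟨loB, hloB⟩ := exists_isLowerEndpoint hpos βi
  obtain ⟨-, h1⟩ := (hadz.add hadi).ncard_setOf_wtF_eq horth hprim hdesc
    (intWt_add_eq hβz hβi) hloA
  obtain ⟨-, h2⟩ := ((isAdmissible_single d).add hadi).ncard_setOf_wtF_eq horth hprim hdesc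
    (intWt_add_eq hβw hβi) (hloB.single_add hdesc d)
  obtain ⟨hfin, h3⟩ := ((isAdmissible_single d).add (hadz.add hadi)).ncard_setOf_wtF_eq horth
    hprim hdesc (add_assoc w z i ▸ intWt_add_eq hβw (intWt_add_eq hβz hβi))
    (hloA.single_add hdesc d)
  obtain ⟨-, h4⟩ := hadi.ncard_setOf_wtF_eq horth hprim hdesc hβi hloB
  have hdvd : -c (Fin.last n) ∣ d ∨ -c (Fin.last n) ∣ βz (Fin.last n) := by
    refine hfree.imp (fun ⟨α, hα, hα0⟩ => ?_) fun ⟨α, hα, hα0⟩ => ?_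
    · simpa [βw] using horth.neg_last_dvd_of_wtF_eq hprim hβw hα hα0
    · exact horth.neg_last_dvd_of_wtF_eq hprim hβz hα hα0
  have key := Int.ediv_add_ediv_eq_of_dvd (b := βi (Fin.last n)) hdvd
  simp only [Pi.add_apply, Pi.single_eq_same] at h1 h2 h3 h4
  refine ⟨hfin, ?_⟩
  have : ({α | wtF ξ α = z + i}.ncard + {α | wtF ξ α = w + i}.ncard : ℤ) =
      {α | wtF ξ α = w + z + i}.ncard + {α | wtF ξ α = i}.ncard := by
    linarith
  exact_mod_cast this

end LatticeLine

section Geometry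

variable {N : ℕ} {Δ : Set (Fin N → ℝ)}

lemma dotp_eq_dotProduct_s13 (η a : Fin N → ℝ) : dotp η a = η ⬝ᵥ a := rfl

lemma IsNewtonPolyhedron.add_mem (hΔ : IsNewtonPolyhedron Δ) {x v : Fin N → ℝ} (hx : x ∈ Δ)
    (hv : 0 ≤ v) : x + v ∈ Δ := by
  obtain ⟨S, -, -, rfl⟩ := hΔ
  obtain ⟨y, hy, u, hu, rfl⟩ := hx
  exact ⟨y, hy, u + v, fun i => add_nonneg (hu i) (hv i), by rw [add_assoc]⟩

lemma IsNewtonPolyhedron.not_isCompact_NPface (hΔ : IsNewtonPolyhedron Δ) {η : Fin N → ℝ}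
    {i : Fin N} (hηi : η i = 0) (hne : (NPface Δ η).Nonempty) : ¬ IsCompact (NPface Δ η) := by
  intro hcpt
  obtain ⟨C, hC⟩ := hcpt.bddAbove_image (continuous_apply i).continuousOn
  obtain ⟨a, haΔ, hamin⟩ := hne
  have hray : a + max 0 (C - a i + 1) • Pi.single i 1 ∈ NPface Δ η := by
    refine ⟨hΔ.add_mem haΔ (smul_nonneg (le_max_left _ _) (Pi.single_nonneg.mpr zero_le_one)),
      fun b hb => ?_⟩
    have : dotp η (a + max 0 (C - a i + 1) • Pi.single i 1) = dotp η a := by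
      simp [dotp_eq_dotProduct_s13, dotProduct_add, dotProduct_smul, dotProduct_single, hηi]
    exact this ▸ hamin b hb
  have := hC ⟨_, hray, rfl⟩
  simp only [Pi.add_apply, Pi.smul_apply, Pi.single_eq_same, smul_eq_mul, mul_one] at this
  linarith [le_max_right 0 (C - a i + 1)]

lemma exists_pos_of_isLooseEdge {n : ℕ} {Δ E : Set (Fin (n+1) → ℝ)} {c : Fin (n+1) → ℤ}
    (hΔ : IsNewtonPolyhedron Δ) (hE : IsLooseEdge Δ E) (hpar : ParallelTo E c)
    (hdesc : DescendantDir c) : ∃ j, 0 < c j := by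
  by_contra! hnpos
  obtain ⟨⟨η, -, rfl⟩, hcpt, -⟩ := hE
  obtain ⟨a, b, hab, hseg, t, hbt⟩ := hpar
  have hc : (fun i => (c i : ℝ)) = Pi.single (Fin.last n) (c (Fin.last n) : ℝ) := by
    ext i
    rcases eq_or_ne i (Fin.last n) with rfl | hi
    · simp
    · simp [hi, le_antisymm (hnpos i) (hdesc.1 i (Fin.val_lt_last hi))]
  have ha : a ∈ NPface Δ η := hseg ▸ left_mem_segment ℝ a b
  have hb : b ∈ NPface Δ η := hseg ▸ right_mem_segment ℝ a b
  have hdot : η ⬝ᵥ (b - a) = 0 := by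
    rw [dotProduct_sub, ← dotp_eq_dotProduct_s13, ← dotp_eq_dotProduct_s13,
      le_antisymm (hb.2 a ha.1) (ha.2 b hb.1), sub_self]
  have ht : t ≠ 0 := by
    rintro rfl
    exact hab (sub_eq_zero.mp (by simpa using hbt)).symm
  rw [hbt, hc, dotProduct_smul, dotProduct_single, smul_eq_mul] at hdot
  have hηlast : η (Fin.last n) = 0 := by
    simpa [ht, hdesc.2.ne] using hdot
  exact hΔ.not_isCompact_NPface hηlast ⟨a, ha⟩ hcpt
end Geometry

/-- if `G ∈ R_w`, `H ∈ R_z` are coprime, `z ∈ M`, and `G` is monic in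
`y`, then `G·R_{z+i} + H·R_{w+i} = R_{w+z+i}` for every `i ∈ M`. -/
theorem surjectivity_monic (K : Type*) [Field K] {n : ℕ} (Δ E : Set (Fin (n+1) → ℝ))
    (hΔ : IsNewtonPolyhedron Δ) (hE : IsLooseEdge Δ E)
    (c : Fin (n+1) → ℤ) (hprim : IsPrimitiveVec c) (hpar : ParallelTo E c)
    (hdesc : DescendantDir c)
    (ξ : Fin n → Fin (n+1) → ℕ) (horth : OrthSetup ξ c)
    (w z : Fin n → ℕ) (hz : Mset ξ c z)
    (G H : MvPolynomial (Fin (n+1)) K) (hG : G ∈ Rw K ξ w) (hH : H ∈ Rw K ξ z)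
    (hcop : RelPrime G H) (hmonic : MonicInY G) :
    ∀ i : Fin n → ℕ, Mset ξ c i →
      (Rw K ξ (z + i)).map (LinearMap.mulLeft K G) ⊔
        (Rw K ξ (w + i)).map (LinearMap.mulLeft K H) = Rw K ξ (w + z + i) := by
  intro i hi
  have hcop' : IsRelPrime G H := fun d => hcop d
  obtain ⟨d, hd, -⟩ := hmonic
  have hdG : Finsupp.single (Fin.last n) d ∈ G.support := by simp [hd]
  have hfree : (∃ α, wtF ξ α = w ∧ α (Fin.last n) = 0) ∨
      ∃ α, wtF ξ α = z ∧ α (Fin.last n) = 0 :=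
    (hcop'.exists_mem_support_apply_eq_zero (Fin.last n)).imp
      (fun ⟨α, hα, hα0⟩ => ⟨α, wtF_eq_of_mem_Rw hG hα, hα0⟩)
      fun ⟨α, hα, hα0⟩ => ⟨α, wtF_eq_of_mem_Rw hH hα, hα0⟩
  obtain ⟨hfin, hcard⟩ := ncard_setOf_wtF_add_ncard_setOf_wtF horth hprim hdesc
    (exists_pos_of_isLooseEdge hΔ hE hpar hdesc) (wtF_eq_of_mem_Rw hG hdG) hfree hz hi
  simp only [wtF_eq_weight] at hfin hcard
  simp only [Rw_eq_weightedHomogeneousSubmodule] at hG hH ⊢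
  rcases eq_or_ne H 0 with rfl | hH0
  · obtain ⟨r, hr, rfl⟩ := isUnit_iff_eq_C_of_isReduced.mp (hcop' dvd_rfl (dvd_zero G))
    obtain rfl : w = 0 := hG.inj_right (C_ne_zero.mpr hr.ne_zero) (isWeightedHomogeneous_C _ r)
    simp [Submodule.map_mulLeft_C hr.ne_zero]
  refine map_mulLeft_sup_map_mulLeft_eq hG hH (ne_zero_iff.mpr ⟨_, mem_support_iff.mp hdG⟩)
    hH0 hcop' (finiteDimensional_weightedHomogeneousSubmodule hfin) ?_
  simpa only [finrank_weightedHomogeneousSubmodule] using hcard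
end

section
/- A monic Weierstrass polynomial f ∈ K[[x_1,…,x_n]][y] of degree d has an orthant associated polyhedron if and only if its Newton polyhedron Δ(f) ⊂ ℝ_{≥0}^{n+1} has a loose edge with endpoint (0,…,0,d). -/
open Finset

/-- The exponent `(α, j)` of a monomial `x^α y^j`, as a point of `ℝ^{n+1}`. -/
def embed2 {n : ℕ} (α : Fin n →₀ ℕ) (j : ℕ) : Fin (n+1) → ℝ :=
  fun i => if h : (i : ℕ) < n then (α ⟨i, h⟩ : ℝ) else (j : ℝ)

/-- Newton polyhedron of `f ∈ K[[x_1,…,x_n]][y]`, in `ℝ_{≥0}^{n+1}`. -/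
def npOfPoly {K : Type*} [Field K] {n : ℕ} (f : Polynomial (MvPowerSeries (Fin n) K)) :
    Set (Fin (n+1) → ℝ) :=
  {x | ∃ y ∈ convexHull ℝ {p : Fin (n+1) → ℝ | ∃ (j : ℕ) (α : Fin n →₀ ℕ),
        MvPowerSeries.coeff α (f.coeff j) ≠ 0 ∧ p = embed2 α j},
     ∃ z : Fin (n+1) → ℝ, (∀ i, 0 ≤ z i) ∧ x = y + z}

/-- A descendant segment in `ℝ^{n+1}`. -/
def IsDescendantSeg {n : ℕ} (E : Set (Fin (n+1) → ℝ)) : Prop :=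
  ∃ c : Fin (n+1) → ℝ, (∀ i : Fin (n+1), (i : ℕ) < n → 0 ≤ c i) ∧ c (Fin.last n) < 0 ∧
    ∃ a b, a ≠ b ∧ E = segment ℝ a b ∧ ∃ t : ℝ, b - a = t • c

open Classical in
/-- `G ∈ K[X][y]` is the symbolic restriction of `f ∈ K[[x]][y]` to `A`. -/
def SymbRestrictPoly {K : Type*} [Field K] {n : ℕ}
    (f : Polynomial (MvPowerSeries (Fin n) K)) (A : Set (Fin (n+1) → ℝ))
    (G : Polynomial (MvPolynomial (Fin n) K)) : Prop :=
  ∀ (j : ℕ) (α : Fin n →₀ ℕ), MvPolynomial.coeff α (G.coeff j) =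
    if embed2 α j ∈ A then MvPowerSeries.coeff α (f.coeff j) else 0

def IsVertexOf {n : ℕ} (Δ : Set (Fin n → ℝ)) (v : Fin n → ℝ) : Prop :=
  ∃ ξ : Fin n → ℝ, (∀ i, 0 ≤ ξ i) ∧ NPface Δ ξ = {v}

/-!
Let `P` be the set of exponents of `f`, `v₀ = (0, …, 0, d)` its apex and `Q` the central
projection of `P \ {v₀}` from `v₀` to the hyperplane `y = 0`, so that the associated polyhedron
is `conv Q + ℝ≥0ⁿ`. For a functional `ξ` the sign of `ξ p - ξ v₀` is that of
`(init ξ) q - d ξₙ₊₁`, where `q` is the projection of `p`; hence the compact faces of `Δ(f)`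
through `v₀` correspond to the positive functionals on `Q`, and such a face is an edge exactly
when the functional has a single minimizer on `Q`.

Both conditions of the theorem are therefore equivalent to `Q` having a least element for the
coordinatewise order. A least element is the only vertex and the only minimizer of every
positive functional. Conversely, `Q` is discrete, so every positive functional is minimized at
some vertex, and if the minimizer `v` of a positive functional is not least, tilting the
functional towards a coordinate in which `v` is too large produces a second minimizer, i.e. a
two-dimensional compact face containing the edge.
-/

open Filter Topology

section ConvexGeometry

variable {k : ℕ} {S : Set (Fin k → ℝ)} {ξ ζ : Fin k → ℝ}

def newtonHull (S : Set (Fin k → ℝ)) : Set (Fin k → ℝ) :=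
  {x | ∃ y ∈ convexHull ℝ S, ∃ z : Fin k → ℝ, (∀ i, 0 ≤ z i) ∧ x = y + z}

theorem mem_NPface {Δ : Set (Fin k → ℝ)} {x : Fin k → ℝ} :
    x ∈ NPface Δ ξ ↔ x ∈ Δ ∧ ∀ b ∈ Δ, ξ ⬝ᵥ x ≤ ξ ⬝ᵥ b :=
  Iff.rfl

theorem subset_newtonHull (S : Set (Fin k → ℝ)) : S ⊆ newtonHull S :=
  fun s hs => ⟨s, subset_convexHull ℝ S hs, 0, fun _ => le_rfl, (add_zero s).symm⟩

theorem dotProduct_lt_dotProduct_of_pos (hξ : ∀ i, 0 < ξ i) {x y : Fin k → ℝ} (hxy : x < y) :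
    ξ ⬝ᵥ x < ξ ⬝ᵥ y := by
  obtain ⟨hle, i, hi⟩ := Pi.lt_def.1 hxy
  exact Finset.sum_lt_sum (fun j _ => mul_le_mul_of_nonneg_left (hle j) (hξ j).le)
    ⟨i, Finset.mem_univ i, mul_lt_mul_of_pos_left hi (hξ i)⟩

theorem eq_of_le_of_dotProduct_le (hξ : ∀ i, 0 < ξ i) {x y : Fin k → ℝ} (hxy : x ≤ y)
    (h : ξ ⬝ᵥ y ≤ ξ ⬝ᵥ x) : x = y :=
  by_contra fun hne => h.not_gt (dotProduct_lt_dotProduct_of_pos hξ (hxy.lt_of_ne hne))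

theorem le_dotProduct_of_mem_newtonHull {m : ℝ} (hξ : ∀ i, 0 ≤ ξ i)
    (hm : ∀ s ∈ S, m ≤ ξ ⬝ᵥ s) {x : Fin k → ℝ} (hx : x ∈ newtonHull S) : m ≤ ξ ⬝ᵥ x := by
  obtain ⟨y, hy, z, hz, rfl⟩ := hx
  have hmy : m ≤ ξ ⬝ᵥ y :=
    convexHull_min hm (convex_halfSpace_ge (dotProductBilin ℝ ℝ ξ).isLinear m) hy
  rw [dotProduct_add]
  linarith [dotProduct_nonneg_of_nonneg (show 0 ≤ ξ from hξ) (show 0 ≤ z from hz)]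

theorem le_of_mem_newtonHull {v x : Fin k → ℝ} (hv : v ∈ lowerBounds S)
    (hx : x ∈ newtonHull S) : v ≤ x := by
  obtain ⟨y, hy, z, hz, rfl⟩ := hx
  exact le_add_of_le_of_nonneg (convexHull_min (fun s hs => hv hs) (convex_Ici v) hy) hz

theorem mem_convexHull_of_dotProduct_eq {m : ℝ} (hm : ∀ s ∈ S, m ≤ ξ ⬝ᵥ s) {x : Fin k → ℝ}
    (hx : x ∈ convexHull ℝ S) (hxm : ξ ⬝ᵥ x = m) :
    x ∈ convexHull ℝ {s ∈ S | ξ ⬝ᵥ s = m} := by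
  set T := {s ∈ S | ξ ⬝ᵥ s = m}
  have hT : convexHull ℝ T ⊆ {w | ξ ⬝ᵥ w = m} :=
    convexHull_min (fun s hs => hs.2) (convex_hyperplane (dotProductBilin ℝ ℝ ξ).isLinear m)
  -- as `m ≤ ξ` on `S`, a convex combination lies on `{ξ = m}` only if its weighted points do
  have hconv : Convex ℝ (convexHull ℝ T ∪ {w | m < ξ ⬝ᵥ w}) := by
    intro a ha b hb s t hs ht hst
    rcases hs.eq_or_lt with rfl | hs
    · simpa [show t = 1 by linarith] using hb
    rcases ht.eq_or_lt with rfl | ht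
    · simpa [show s = 1 by linarith] using ha
    obtain rfl : t = 1 - s := by linarith
    have hval : ξ ⬝ᵥ (s • a + (1 - s) • b) = s * ξ ⬝ᵥ a + (1 - s) * ξ ⬝ᵥ b := by
      rw [dotProduct_add, dotProduct_smul, dotProduct_smul, smul_eq_mul, smul_eq_mul]
    have hma : m ≤ ξ ⬝ᵥ a := ha.elim (fun h => (hT h).ge) fun h => h.out.le
    have hmb : m ≤ ξ ⬝ᵥ b := hb.elim (fun h => (hT h).ge) fun h => h.out.le
    by_cases hlt : m < ξ ⬝ᵥ (s • a + (1 - s) • b)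
    · exact Or.inr hlt
    refine Or.inl (convex_convexHull ℝ T ?_ ?_ hs.le ht.le hst)
    · exact ha.resolve_right fun h => hlt (by
        rw [hval]; linarith [mul_lt_mul_of_pos_left h.out hs, mul_le_mul_of_nonneg_left hmb ht.le])
    · exact hb.resolve_right fun h => hlt (by
        rw [hval]; linarith [mul_lt_mul_of_pos_left h.out ht, mul_le_mul_of_nonneg_left hma hs.le])
  rcases convexHull_min (fun s hs => (hm s hs).eq_or_lt.imp (fun h => subset_convexHull ℝ T
    ⟨hs, h.symm⟩) id) hconv hx with h | h
  · exact h
  · exact absurd hxm h.ne'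

theorem NPface_newtonHull_eq (hξ : ∀ i, 0 < ξ i) {u : Fin k → ℝ} (hu : u ∈ S)
    (hmin : IsMinOn (ξ ⬝ᵥ ·) S u) :
    NPface (newtonHull S) ξ = convexHull ℝ {s ∈ S | ξ ⬝ᵥ s = ξ ⬝ᵥ u} := by
  have hm : ∀ s ∈ S, ξ ⬝ᵥ u ≤ ξ ⬝ᵥ s := fun s hs => hmin hs
  ext x
  rw [mem_NPface]
  constructor
  · rintro ⟨⟨y, hy, z, hz, rfl⟩, hxmin⟩
    have hyz : ξ ⬝ᵥ (y + z) ≤ ξ ⬝ᵥ u := hxmin u (subset_newtonHull S hu)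
    have hmy : ξ ⬝ᵥ u ≤ ξ ⬝ᵥ y :=
      convexHull_min hm (convex_halfSpace_ge (dotProductBilin ℝ ℝ ξ).isLinear _) hy
    have hz0 : 0 = z := eq_of_le_of_dotProduct_le hξ hz (by
      rw [dotProduct_add] at hyz
      rw [dotProduct_zero]
      linarith)
    rw [← hz0, add_zero]
    exact mem_convexHull_of_dotProduct_eq hm hy (le_antisymm (by simpa [← hz0] using hyz) hmy)
  · intro hx
    have hxS : x ∈ convexHull ℝ S := convexHull_mono (fun s hs => hs.1) hx
    have hxm : ξ ⬝ᵥ x = ξ ⬝ᵥ u := convexHull_min (fun s hs => hs.2)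
      (convex_hyperplane (dotProductBilin ℝ ℝ ξ).isLinear _) hx
    refine ⟨⟨x, hxS, 0, fun _ => le_rfl, (add_zero x).symm⟩, fun b hb => ?_⟩
    rw [hxm]
    exact le_dotProduct_of_mem_newtonHull (fun i => (hξ i).le) hm hb

theorem pos_of_isCompact_NPface_s18 (hξ : ∀ i, 0 ≤ ξ i) {x : Fin k → ℝ}
    (hx : x ∈ NPface (newtonHull S) ξ) (hc : IsCompact (NPface (newtonHull S) ξ)) (i : Fin k) :
    0 < ξ i := by
  refine (hξ i).lt_of_ne fun hi => ?_
  have hray : ∀ t : ℝ, 0 ≤ t → x + Pi.single i t ∈ NPface (newtonHull S) ξ := by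
    intro t ht
    obtain ⟨⟨y, hy, z, hz, rfl⟩, hmin⟩ := hx
    have hsingle : (0 : Fin k → ℝ) ≤ Pi.single i t := Pi.single_nonneg.2 ht
    refine ⟨⟨y, hy, z + Pi.single i t, fun j => add_nonneg (hz j) (hsingle j), by abel⟩,
      fun b hb => ?_⟩
    show ξ ⬝ᵥ (y + z + Pi.single i t) ≤ ξ ⬝ᵥ b
    rw [dotProduct_add, dotProduct_single, ← hi, zero_mul, add_zero]
    exact hmin b hb
  obtain ⟨C, hC⟩ := (hc.image (continuous_apply i)).bddAbove
  have := hC ⟨_, hray (|C - x i| + 1) (by positivity), rfl⟩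
  simp only [Pi.add_apply, Pi.single_eq_same] at this
  linarith [le_abs_self (C - x i)]

theorem NPface_eq_convexHull_of_isCompact (hξ : ∀ i, 0 ≤ ξ i) {u : Fin k → ℝ} (hu : u ∈ S)
    (huF : u ∈ NPface (newtonHull S) ξ) (hc : IsCompact (NPface (newtonHull S) ξ)) :
    (∀ i, 0 < ξ i) ∧ NPface (newtonHull S) ξ = convexHull ℝ {s ∈ S | ξ ⬝ᵥ s = ξ ⬝ᵥ u} :=
  have hpos := pos_of_isCompact_NPface_s18 hξ huF hc
  ⟨hpos, NPface_newtonHull_eq hpos hu fun s hs => huF.2 s (subset_newtonHull S hs)⟩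

def HasFiniteSublevels (S : Set (Fin k → ℝ)) : Prop :=
  ∀ ξ : Fin k → ℝ, (∀ i, 0 < ξ i) → ∀ C : ℝ, {s ∈ S | ξ ⬝ᵥ s ≤ C}.Finite

theorem hasFiniteSublevels_of_natCast (hS : ∀ s ∈ S, ∀ i, ∃ m : ℕ, s i = m) :
    HasFiniteSublevels S := by
  intro ξ hξ C
  choose! g hg using hS
  refine ((Set.finite_Iic fun i => ⌊C / ξ i⌋₊).image fun m i => (m i : ℝ)).subset ?_
  rintro s ⟨hs, hsC⟩
  have hs0 : ∀ j, 0 ≤ ξ j * s j := fun j => mul_nonneg (hξ j).le (hg s hs j ▸ Nat.cast_nonneg _)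
  refine ⟨g s, fun i => Nat.le_floor ?_, funext fun i => (hg s hs i).symm⟩
  rw [← hg s hs i, le_div_iff₀ (hξ i), mul_comm]
  exact (Finset.single_le_sum (fun j _ => hs0 j) (Finset.mem_univ i)).trans hsC

namespace HasFiniteSublevels

theorem exists_isMinOn (hS : HasFiniteSublevels S) (hξ : ∀ i, 0 < ξ i) (hne : S.Nonempty) :
    ∃ u ∈ S, IsMinOn (ξ ⬝ᵥ ·) S u := by
  obtain ⟨s₀, hs₀⟩ := hne
  obtain ⟨u, ⟨hu, -⟩, humin⟩ :=
    Set.exists_min_image _ (ξ ⬝ᵥ ·) (hS ξ hξ (ξ ⬝ᵥ s₀)) ⟨s₀, hs₀, le_rfl⟩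
  refine ⟨u, hu, fun s hs => ?_⟩
  rcases le_total (ξ ⬝ᵥ s) (ξ ⬝ᵥ s₀) with h | h
  · exact humin s ⟨hs, h⟩
  · exact (humin s₀ ⟨hs₀, le_rfl⟩).trans h

theorem finite_argmin (hS : HasFiniteSublevels S) (hξ : ∀ i, 0 < ξ i) (m : ℝ) :
    {s ∈ S | ξ ⬝ᵥ s = m}.Finite :=
  (hS ξ hξ m).subset fun _ hs => ⟨hs.1, hs.2.le⟩

theorem exists_add_smul_isMinOn (hS : HasFiniteSublevels S) (hS0 : ∀ s ∈ S, 0 ≤ s)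
    (hζ : ∀ i, 0 < ζ i) {b w : Fin k → ℝ} (hb : IsMinOn (ζ ⬝ᵥ ·) S b) (hw : 0 ≤ w)
    (hbw : ∀ s ∈ S, ζ ⬝ᵥ s = ζ ⬝ᵥ b → w ⬝ᵥ b ≤ w ⬝ᵥ s) :
    ∃ ε : ℝ, 0 < ε ∧ ∀ s ∈ S, (ζ + ε • w) ⬝ᵥ b ≤ (ζ + ε • w) ⬝ᵥ s ∧
      ((ζ + ε • w) ⬝ᵥ s = (ζ + ε • w) ⬝ᵥ b → ζ ⬝ᵥ s = ζ ⬝ᵥ b ∧ w ⬝ᵥ s = w ⬝ᵥ b) := by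
  have hsmall : ∀ c > 0, ∀ᶠ ε in 𝓝[>] (0 : ℝ), ε * w ⬝ᵥ b < c := fun c hc =>
    (((continuous_id.mul continuous_const).tendsto' 0 0 (by simp)).mono_left
      nhdsWithin_le_nhds).eventually (gt_mem_nhds hc)
  -- only finitely many values of `ζ` lie in `(ζ b, ζ b + 1]`, so they stay above the new minimum
  set N := {s ∈ S | ζ ⬝ᵥ s ≠ ζ ⬝ᵥ b ∧ ζ ⬝ᵥ s ≤ ζ ⬝ᵥ b + 1}
  have hN : ∀ᶠ ε in 𝓝[>] (0 : ℝ), ∀ s ∈ N, ε * w ⬝ᵥ b < ζ ⬝ᵥ s - ζ ⬝ᵥ b :=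
    (eventually_all_finite ((hS ζ hζ _).subset fun s hs => ⟨hs.1, hs.2.2⟩)).2
      fun s hs => hsmall _ (sub_pos.2 ((hb hs.1).lt_of_ne (Ne.symm hs.2.1)))
  obtain ⟨ε, hε, hε1, hεN⟩ := (eventually_mem_nhdsWithin.and ((hsmall 1 one_pos).and hN)).exists
  have hε : 0 < ε := hε
  refine ⟨ε, hε, fun s hs => ?_⟩
  have hval : ∀ x, (ζ + ε • w) ⬝ᵥ x = ζ ⬝ᵥ x + ε * w ⬝ᵥ x := fun x => by
    rw [add_dotProduct, smul_dotProduct, smul_eq_mul]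
  have hws : 0 ≤ w ⬝ᵥ s := dotProduct_nonneg_of_nonneg hw (hS0 s hs)
  rw [hval, hval]
  by_cases hsm : ζ ⬝ᵥ s = ζ ⬝ᵥ b
  · have hβ := hbw s hs hsm
    refine ⟨by rw [hsm]; nlinarith, fun h => ⟨hsm, ?_⟩⟩
    rw [hsm] at h
    exact mul_left_cancel₀ hε.ne' (by linarith)
  · have hgt : ζ ⬝ᵥ b + ε * w ⬝ᵥ b < ζ ⬝ᵥ s := by
      by_cases hs1 : ζ ⬝ᵥ s ≤ ζ ⬝ᵥ b + 1
      · linarith [hεN s ⟨hs, hsm, hs1⟩]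
      · linarith
    have : ζ ⬝ᵥ b + ε * w ⬝ᵥ b < ζ ⬝ᵥ s + ε * w ⬝ᵥ s := by nlinarith
    exact ⟨this.le, fun h => absurd h this.ne'⟩

theorem exists_strictMinimizer_of_isMinOn (hS : HasFiniteSublevels S) (hS0 : ∀ s ∈ S, 0 ≤ s)
    (hζ : ∀ i, 0 < ζ i) {u : Fin k → ℝ} (hu : u ∈ S) (humin : IsMinOn (ζ ⬝ᵥ ·) S u) :
    ∃ v ∈ S, ζ ⬝ᵥ v = ζ ⬝ᵥ u ∧
      ∃ η : Fin k → ℝ, (∀ i, 0 < η i) ∧ ∀ s ∈ S, s ≠ v → η ⬝ᵥ v < η ⬝ᵥ s := by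
  induction hN : {s ∈ S | ζ ⬝ᵥ s = ζ ⬝ᵥ u}.ncard using Nat.strong_induction_on
    generalizing ζ u with
  | _ N ih =>
  by_cases huniq : ∀ s ∈ S, s ≠ u → ζ ⬝ᵥ u < ζ ⬝ᵥ s
  · exact ⟨u, hu, rfl, ζ, hζ, huniq⟩
  obtain ⟨s₁, hs₁, hs₁u, hle⟩ : ∃ s ∈ S, s ≠ u ∧ ζ ⬝ᵥ s ≤ ζ ⬝ᵥ u := by simpa using huniq
  obtain ⟨i, hi⟩ := Function.ne_iff.1 hs₁u
  set B := {s ∈ S | ζ ⬝ᵥ s = ζ ⬝ᵥ u}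
  have hBfin : B.Finite := hS.finite_argmin hζ _
  obtain ⟨b, hbB, hbi⟩ := Set.exists_min_image B (· i) hBfin ⟨u, hu, rfl⟩
  have hbmin : IsMinOn (ζ ⬝ᵥ ·) S b := fun s hs => hbB.2.trans_le (humin hs)
  -- tilting `ζ` towards the `i`-th axis keeps the points of `B` with least `i`-th coordinate
  obtain ⟨ε, hε, hεb⟩ := hS.exists_add_smul_isMinOn hS0 hζ hbmin
    (w := Pi.single i 1) (Pi.single_nonneg.2 zero_le_one) fun s hs hsb => by
      simpa [single_dotProduct] using hbi s ⟨hs, hsb.trans hbB.2⟩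
  set ζ' := ζ + ε • Pi.single i 1
  have hζ' : ∀ j, 0 < ζ' j := fun j => by
    have : (0 : ℝ) ≤ (Pi.single i 1 : Fin k → ℝ) j := by by_cases h : j = i <;> simp [h]
    simp only [ζ', Pi.add_apply, Pi.smul_apply, smul_eq_mul]
    nlinarith [hζ j]
  have hsub : {s ∈ S | ζ' ⬝ᵥ s = ζ' ⬝ᵥ b} ⊂ B := by
    have hcoord : ∀ s ∈ S, ζ' ⬝ᵥ s = ζ' ⬝ᵥ b → s ∈ B ∧ s i = b i := fun s hs h => by
      obtain ⟨h1, h2⟩ := (hεb s hs).2 h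
      exact ⟨⟨hs, h1.trans hbB.2⟩, by simpa [single_dotProduct] using h2⟩
    rw [Set.ssubset_iff_of_subset fun s hs => (hcoord s hs.1 hs.2).1]
    by_cases hub : u i = b i
    · exact ⟨s₁, ⟨hs₁, le_antisymm hle (humin hs₁)⟩, fun h => hi (hub ▸ (hcoord _ h.1 h.2).2)⟩
    · exact ⟨u, ⟨hu, rfl⟩, fun h => hub (hcoord _ h.1 h.2).2⟩
  obtain ⟨v, hv, hvb, η, hη, hvη⟩ :=
    ih _ (hN ▸ Set.ncard_lt_ncard hsub hBfin) hζ' hbB.1 (fun s hs => (hεb s hs).1) rfl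
  exact ⟨v, hv, ((hεb v hv).2 hvb).1.trans hbB.2, η, hη, hvη⟩

theorem exists_isMinOn_tie_of_lt (hS : HasFiniteSublevels S) (hS0 : ∀ s ∈ S, 0 ≤ s)
    (hξ : ∀ i, 0 < ξ i) {v : Fin k → ℝ} (hvξ : ∀ s ∈ S, s ≠ v → ξ ⬝ᵥ v < ξ ⬝ᵥ s)
    {q : Fin k → ℝ} (hq : q ∈ S) {i : Fin k} (hqi : q i < v i) :
    ∃ ζ : Fin k → ℝ, (∀ j, 0 < ζ j) ∧ IsMinOn (ζ ⬝ᵥ ·) S v ∧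
      ∃ u ∈ S, u ≠ v ∧ ζ ⬝ᵥ u = ζ ⬝ᵥ v := by
  -- along `(1 - t) ξ + t eᵢ` a point `s` below `v` in coordinate `i` ties with `v` at
  -- `t = crit s`; the first tie, found among the finitely many `s` with `crit s ≤ crit q`, works
  set c : (Fin k → ℝ) → ℝ := fun s => ξ ⬝ᵥ s - ξ ⬝ᵥ v
  set crit : (Fin k → ℝ) → ℝ := fun s => c s / (c s - (s i - v i))
  have hc : ∀ s ∈ S, s i < v i → 0 < c s := fun s hs hsi =>
    sub_pos.2 (hvξ s hs fun h => hsi.ne (by rw [h]))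
  have hcrit : ∀ s ∈ S, s i < v i → 0 < crit s ∧ crit s < 1 := fun s hs hsi =>
    ⟨div_pos (hc s hs hsi) (by linarith [hc s hs hsi]),
      (div_lt_one (by linarith [hc s hs hsi])).2 (by linarith)⟩
  set ζ : ℝ → Fin k → ℝ := fun t => (1 - t) • ξ + t • Pi.single i 1
  have hζ : ∀ t s, ζ t ⬝ᵥ s - ζ t ⬝ᵥ v = (1 - t) * c s + t * (s i - v i) := fun t s => by
    simp only [ζ, c, add_dotProduct, smul_dotProduct, single_dotProduct, smul_eq_mul]
    ring
  set V := {s ∈ S | s i < v i ∧ crit s ≤ crit q}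
  have hVfin : V.Finite := by
    obtain ⟨h0, h1⟩ := hcrit q hq hqi
    refine (hS ξ hξ (ξ ⬝ᵥ v + crit q * v i / (1 - crit q))).subset fun s hs => ⟨hs.1, ?_⟩
    have hcs := hc s hs.1 hs.2.1
    have h := (div_le_iff₀ (by linarith [hs.2.1] : 0 < c s - (s i - v i))).1 hs.2.2
    rw [← sub_le_iff_le_add', le_div_iff₀ (by linarith)]
    show c s * (1 - crit q) ≤ crit q * v i
    nlinarith [mul_nonneg h0.le (hS0 s hs.1 i)]
  obtain ⟨u, huV, humin⟩ := Set.exists_min_image V crit hVfin ⟨q, hq, hqi, le_rfl⟩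
  obtain ⟨ht0, ht1⟩ := hcrit u huV.1 huV.2.1
  refine ⟨ζ (crit u), fun j => ?_, fun s hs => ?_, u, huV.1, fun h => huV.2.1.ne (by rw [h]), ?_⟩
  · have : (0 : ℝ) ≤ (Pi.single i 1 : Fin k → ℝ) j := by by_cases h : j = i <;> simp [h]
    simp only [ζ, Pi.add_apply, Pi.smul_apply, smul_eq_mul]
    nlinarith [hξ j]
  · show ζ (crit u) ⬝ᵥ v ≤ ζ (crit u) ⬝ᵥ s
    rw [← sub_nonneg, hζ]
    rcases le_or_gt (v i) (s i) with hsi | hsi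
    · have : 0 ≤ c s := by
        rcases eq_or_ne s v with rfl | hsv
        · simp [c]
        · exact (sub_pos.2 (hvξ s hs hsv)).le
      nlinarith
    · have hut : crit u ≤ crit s := by
        by_cases hsq : crit s ≤ crit q
        · exact humin s ⟨hs, hsi, hsq⟩
        · exact huV.2.2.trans (not_le.1 hsq).le
      have := (le_div_iff₀ (by linarith [hc s hs hsi])).1 hut
      nlinarith
  · have hne : c u - (u i - v i) ≠ 0 := by linarith [hc u huV.1 huV.2.1, huV.2.1]
    rw [← sub_eq_zero, hζ]
    simp only [crit]
    field_simp
    ring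

end HasFiniteSublevels

theorem isVertexOf_newtonHull_iff (hS : HasFiniteSublevels S) {v : Fin k → ℝ} :
    IsVertexOf (newtonHull S) v ↔
      v ∈ S ∧ ∃ η : Fin k → ℝ, (∀ i, 0 < η i) ∧ ∀ s ∈ S, s ≠ v → η ⬝ᵥ v < η ⬝ᵥ s := by
  constructor
  · rintro ⟨η, hη, hface⟩
    have hvF : v ∈ NPface (newtonHull S) η := hface ▸ rfl
    have hpos := pos_of_isCompact_NPface_s18 hη hvF (hface ▸ isCompact_singleton)
    obtain ⟨y, hy, -⟩ := hvF.1
    obtain ⟨u, hu, humin⟩ := hS.exists_isMinOn hpos (convexHull_nonempty_iff.1 ⟨y, hy⟩)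
    have hA : {s ∈ S | η ⬝ᵥ s = η ⬝ᵥ u} ⊆ {v} :=
      hface ▸ NPface_newtonHull_eq hpos hu humin ▸ subset_convexHull ℝ _
    obtain rfl : u = v := hA ⟨hu, rfl⟩
    exact ⟨hu, η, hpos, fun s hs hsu =>
      (humin hs).lt_of_ne fun h => hsu (hA ⟨hs, h.symm⟩)⟩
  · rintro ⟨hv, η, hη, hvη⟩
    refine ⟨η, fun i => (hη i).le, ?_⟩
    have hmin : IsMinOn (η ⬝ᵥ ·) S v := isMinOn_iff.2 fun s hs => by
      rcases eq_or_ne s v with rfl | h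
      exacts [le_rfl, (hvη s hs h).le]
    rw [NPface_newtonHull_eq hη hv hmin, ← convexHull_singleton (𝕜 := ℝ) v]
    congr 1
    ext s
    refine ⟨fun hs => by_contra fun h => (hvη s hs.1 h).ne' hs.2, ?_⟩
    rintro rfl
    exact ⟨hv, rfl⟩

theorem isLeast_of_forall_isMinOn {v : Fin k → ℝ} (hv : v ∈ S)
    (h : ∀ ζ : Fin k → ℝ, (∀ i, 0 < ζ i) → IsMinOn (ζ ⬝ᵥ ·) S v) : IsLeast S v := by
  refine ⟨hv, fun q hq i => ?_⟩
  -- test against `eᵢ + ε 𝟙` and let `ε → 0`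
  have hε : ∀ ε > (0 : ℝ), v i + ε * ∑ j, v j ≤ q i + ε * ∑ j, q j := fun ε hε => by
    have hpos : ∀ j, 0 < (Pi.single i 1 + ε • 1 : Fin k → ℝ) j := fun j => by
      by_cases h : j = i <;> simp [h, hε]
      linarith
    simpa [add_dotProduct, single_dotProduct, smul_dotProduct, one_dotProduct]
      using h _ hpos hq
  have hlim : ∀ a b : ℝ, Tendsto (fun ε => a + ε * b) (𝓝[>] 0) (𝓝 a) := fun a b =>
    ((by fun_prop : Continuous fun ε : ℝ => a + ε * b).tendsto' 0 a (by simp)).mono_left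
      nhdsWithin_le_nhds
  exact le_of_tendsto_of_tendsto (hlim _ _) (hlim _ _) (eventually_nhdsWithin_of_forall hε)

theorem existsUnique_isVertexOf_newtonHull_iff (hS0 : ∀ s ∈ S, 0 ≤ s)
    (hS : HasFiniteSublevels S) : (∃! v, IsVertexOf (newtonHull S) v) ↔ ∃ v, IsLeast S v := by
  constructor
  · rintro ⟨v, hv, huniq⟩
    refine ⟨v, isLeast_of_forall_isMinOn ((isVertexOf_newtonHull_iff hS).1 hv).1 fun ζ hζ => ?_⟩
    -- every positive functional attains its minimum at some vertex, which can only be `v`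
    obtain ⟨u, hu, humin⟩ := hS.exists_isMinOn hζ ⟨v, ((isVertexOf_newtonHull_iff hS).1 hv).1⟩
    obtain ⟨w, hw, hwu, hwvert⟩ := hS.exists_strictMinimizer_of_isMinOn hS0 hζ hu humin
    obtain rfl := huniq w ((isVertexOf_newtonHull_iff hS).2 ⟨hw, hwvert⟩)
    exact fun s hs => hwu.trans_le (humin hs)
  · rintro ⟨v, hvS, hvle⟩
    refine ⟨v, (isVertexOf_newtonHull_iff hS).2 ⟨hvS, fun _ => 1, fun _ => one_pos,
      fun s hs hsv => dotProduct_lt_dotProduct_of_pos (fun _ => one_pos)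
        ((hvle hs).lt_of_ne (Ne.symm hsv))⟩, ?_⟩
    rintro w ⟨η, hη, hface⟩
    have hwF : w ∈ NPface (newtonHull S) η := hface ▸ rfl
    have hvw : v ≤ w := le_of_mem_newtonHull hvle hwF.1
    have hvF : v ∈ NPface (newtonHull S) η := ⟨subset_newtonHull S hvS, fun b hb =>
      (dotProduct_le_dotProduct_of_nonneg_left hvw (show 0 ≤ η from hη)).trans (hwF.2 b hb)⟩
    exact (hface ▸ hvF : v ∈ ({w} : Set _)).symm

theorem npDim_convexHull (A : Set (Fin k → ℝ)) : npDim (convexHull ℝ A) = npDim A := by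
  rw [npDim, npDim, ← direction_affineSpan, affineSpan_convexHull, direction_affineSpan]

theorem npDim_segment {a b : Fin k → ℝ} (hab : a ≠ b) : npDim (segment ℝ a b) = 1 := by
  rw [npDim, vectorSpan_segment, vsub_eq_sub, finrank_span_singleton (sub_ne_zero.2 hab.symm)]

theorem npDim_le_one_of_subset_line {A : Set (Fin k → ℝ)} {x u : Fin k → ℝ}
    (hA : ∀ p ∈ A, ∃ t : ℝ, p = x + t • u) : npDim A ≤ 1 := by
  have hle : vectorSpan ℝ A ≤ ℝ ∙ u := by
    rw [vectorSpan_def, Submodule.span_le]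
    rintro _ ⟨p, hp, p', hp', rfl⟩
    obtain ⟨t, rfl⟩ := hA p hp
    obtain ⟨t', rfl⟩ := hA p' hp'
    exact Submodule.mem_span_singleton.2 ⟨t - t', by simp only [vsub_eq_sub]; module⟩
  refine (Submodule.finrank_mono hle).trans ?_
  simpa using finrank_span_le_card ({u} : Set (Fin k → ℝ))

theorem two_le_npDim_s18 {A : Set (Fin k → ℝ)} {x y z : Fin k → ℝ} (hx : x ∈ A) (hy : y ∈ A)
    (hz : z ∈ A) (hli : LinearIndependent ℝ ![y - x, z - x]) : 2 ≤ npDim A := by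
  have hle : Submodule.span ℝ (Set.range ![y - x, z - x]) ≤ vectorSpan ℝ A := by
    rw [Submodule.span_le, Set.range_subset_iff]
    intro j
    fin_cases j
    exacts [vsub_mem_vectorSpan ℝ hy hx, vsub_mem_vectorSpan ℝ hz hx]
  simpa [npDim, finrank_span_eq_card hli] using Submodule.finrank_mono hle

theorem exists_convexHull_eq_segment {A : Set (Fin k → ℝ)} {x u : Fin k → ℝ} (hA : A.Finite)
    (hx : x ∈ A) (hray : ∀ p ∈ A, ∃ t : ℝ, 0 ≤ t ∧ p = x + t • u) :
    ∃ a ∈ A, convexHull ℝ A = segment ℝ x a := by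
  choose! t ht hpt using hray
  obtain ⟨a, ha, hmax⟩ := Set.exists_max_image A t hA ⟨x, hx⟩
  refine ⟨a, ha, (convexHull_min (fun p hp => ?_) (convex_segment x a)).antisymm ?_⟩
  · rw [segment_eq_image']
    rcases (ht a ha).eq_or_lt with h0 | hpos
    · have : t p = 0 := le_antisymm (h0 ▸ hmax p hp) (ht p hp)
      exact ⟨0, Set.left_mem_Icc.2 zero_le_one, by rw [hpt p hp, this]; simp⟩
    · refine ⟨t p / t a, ⟨div_nonneg (ht p hp) hpos.le, div_le_one_of_le₀ (hmax p hp) hpos.le⟩, ?_⟩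
      have hax : a - x = t a • u := sub_eq_iff_eq_add'.2 (hpt a ha)
      show x + (t p / t a) • (a - x) = p
      rw [hax, smul_smul, div_mul_cancel₀ _ hpos.ne', ← hpt p hp]
  · rw [← convexHull_pair]
    exact convexHull_mono (Set.pair_subset hx ha)

end ConvexGeometry

section Apex

variable {n d : ℕ} {P : Set (Fin (n + 1) → ℝ)} {ξ : Fin (n + 1) → ℝ} {ζ : Fin n → ℝ}

theorem embed2_eq_snoc (α : Fin n →₀ ℕ) (j : ℕ) :
    embed2 α j = Fin.snoc (fun i => (α i : ℝ)) (j : ℝ) := by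
  ext i
  induction i using Fin.lastCases with
  | last => simp [embed2]
  | cast i => simp [embed2]

theorem dotProduct_eq_init_add_last (ξ p : Fin (n + 1) → ℝ) :
    ξ ⬝ᵥ p = Fin.init ξ ⬝ᵥ Fin.init p + ξ (Fin.last n) * p (Fin.last n) :=
  Fin.sum_univ_castSucc _

theorem dotProduct_embed2_zero (ξ : Fin (n + 1) → ℝ) :
    ξ ⬝ᵥ embed2 0 d = ξ (Fin.last n) * d := by
  simp [dotProduct_eq_init_add_last, embed2_eq_snoc]

/-- Central projection from the apex `embed2 0 d = (0, …, 0, d)` to the hyperplane `y = 0`. -/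
noncomputable def apexProj (d : ℕ) (p : Fin (n + 1) → ℝ) : Fin n → ℝ :=
  ((d : ℝ) / (d - p (Fin.last n))) • Fin.init p

theorem apexProj_embed2 (α : Fin n →₀ ℕ) (j : ℕ) :
    apexProj d (embed2 α j) = fun i => ((d : ℝ) / (d - j)) * α i := by
  ext i
  simp [apexProj, embed2_eq_snoc]

theorem init_eq_smul_apexProj (hd : 0 < d) {p : Fin (n + 1) → ℝ} (hp : p (Fin.last n) < d) :
    Fin.init p = ((d - p (Fin.last n)) / d) • apexProj d p := by
  have hpd : (d : ℝ) - p (Fin.last n) ≠ 0 := (sub_pos.2 hp).ne'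
  have hd' : (d : ℝ) ≠ 0 := Nat.cast_ne_zero.2 hd.ne'
  rw [apexProj, smul_smul, div_mul_div_cancel₀ hd', div_self hpd, one_smul]

theorem eq_embed2_add_smul (hd : 0 < d) {p : Fin (n + 1) → ℝ} (hp : p (Fin.last n) < d) :
    p = embed2 0 d + ((d - p (Fin.last n)) / d) • Fin.snoc (apexProj d p) (-d : ℝ) := by
  have hd' : (d : ℝ) ≠ 0 := Nat.cast_ne_zero.2 hd.ne'
  ext i
  induction i using Fin.lastCases with
  | last =>
    simp only [Pi.add_apply, Pi.smul_apply, Fin.snoc_last, embed2_eq_snoc, smul_eq_mul]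
    field_simp
    ring
  | cast i =>
    have := congrFun (init_eq_smul_apexProj hd hp) i
    simp only [Fin.init] at this
    simp [embed2_eq_snoc, this]

theorem dotProduct_sub_dotProduct_embed2 (hd : 0 < d) {p : Fin (n + 1) → ℝ}
    (hp : p (Fin.last n) < d) (ξ : Fin (n + 1) → ℝ) :
    ξ ⬝ᵥ p - ξ ⬝ᵥ embed2 0 d =
      ((d - p (Fin.last n)) / d) * (Fin.init ξ ⬝ᵥ apexProj d p - ξ ⬝ᵥ embed2 0 d) := by
  have hd' : (d : ℝ) ≠ 0 := Nat.cast_ne_zero.2 hd.ne'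
  rw [dotProduct_eq_init_add_last ξ p, init_eq_smul_apexProj hd hp, dotProduct_smul, smul_eq_mul,
    dotProduct_embed2_zero]
  field_simp
  ring

theorem apexProj_embed2_add_smul {c : ℝ} (hc : c ≠ 0) (w : Fin (n + 1) → ℝ) :
    apexProj d (embed2 0 d + c • w) = apexProj d (embed2 0 d + w) := by
  ext i
  simp only [apexProj, embed2_eq_snoc, Pi.smul_apply, Pi.add_apply, Fin.snoc_last, Fin.init,
    Fin.snoc_castSucc, smul_eq_mul]
  simp only [Finsupp.coe_zero, Pi.zero_apply, Nat.cast_zero, zero_add, sub_add_cancel_left]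
  rcases eq_or_ne (w (Fin.last n)) 0 with h | h
  · simp [h]
  · field_simp

theorem linearIndependent_of_apexProj_ne {w₁ w₂ : Fin (n + 1) → ℝ} (h₁ : w₁ ≠ 0) (h₂ : w₂ ≠ 0)
    (h : apexProj d (embed2 0 d + w₁) ≠ apexProj d (embed2 0 d + w₂)) :
    LinearIndependent ℝ ![w₁, w₂] := by
  rw [LinearIndependent.pair_iff' h₁]
  rintro c rfl
  exact h (apexProj_embed2_add_smul (left_ne_zero_of_smul h₂) w₁).symm

structure IsWeierstrassSupport (d : ℕ) (P : Set (Fin (n + 1) → ℝ)) : Prop where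
  natCast : ∀ p ∈ P, ∀ i, ∃ m : ℕ, p i = m
  apex_mem : embed2 0 d ∈ P
  last_lt : ∀ p ∈ P, p ≠ embed2 0 d → p (Fin.last n) < d
  init_ne_zero : ∀ p ∈ P, p ≠ embed2 0 d → Fin.init p ≠ 0

def projectFromApex (d : ℕ) (P : Set (Fin (n + 1) → ℝ)) : Set (Fin n → ℝ) :=
  apexProj d '' (P \ {embed2 0 d})

namespace IsWeierstrassSupport

theorem nonneg (hP : IsWeierstrassSupport d P) {p : Fin (n + 1) → ℝ} (hp : p ∈ P)
    (i : Fin (n + 1)) : 0 ≤ p i := by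
  obtain ⟨m, hm⟩ := hP.natCast p hp i
  exact hm ▸ m.cast_nonneg

theorem degree_pos (hP : IsWeierstrassSupport d P) {p : Fin (n + 1) → ℝ} (hp : p ∈ P)
    (hpv : p ≠ embed2 0 d) : 0 < d := by
  exact_mod_cast (hP.nonneg hp (Fin.last n)).trans_lt (hP.last_lt p hp hpv)

theorem hasFiniteSublevels (hP : IsWeierstrassSupport d P) : HasFiniteSublevels P :=
  hasFiniteSublevels_of_natCast hP.natCast

theorem apex_le_iff (hP : IsWeierstrassSupport d P) {p : Fin (n + 1) → ℝ} (hp : p ∈ P)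
    (hpv : p ≠ embed2 0 d) :
    ξ ⬝ᵥ embed2 0 d ≤ ξ ⬝ᵥ p ↔ ξ ⬝ᵥ embed2 0 d ≤ Fin.init ξ ⬝ᵥ apexProj d p := by
  have hd := hP.degree_pos hp hpv
  have hpd := hP.last_lt p hp hpv
  rw [← sub_nonneg, dotProduct_sub_dotProduct_embed2 hd hpd,
    mul_nonneg_iff_of_pos_left (div_pos (sub_pos.2 hpd) (Nat.cast_pos.2 hd)), sub_nonneg]

theorem apex_eq_iff (hP : IsWeierstrassSupport d P) {p : Fin (n + 1) → ℝ} (hp : p ∈ P)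
    (hpv : p ≠ embed2 0 d) :
    ξ ⬝ᵥ p = ξ ⬝ᵥ embed2 0 d ↔ Fin.init ξ ⬝ᵥ apexProj d p = ξ ⬝ᵥ embed2 0 d := by
  have hd := hP.degree_pos hp hpv
  have hpd := hP.last_lt p hp hpv
  rw [← sub_eq_zero, dotProduct_sub_dotProduct_embed2 hd hpd, mul_eq_zero,
    or_iff_right (div_pos (sub_pos.2 hpd) (Nat.cast_pos.2 hd)).ne', sub_eq_zero]

theorem isMinOn_apex_iff (hP : IsWeierstrassSupport d P) :
    IsMinOn (ξ ⬝ᵥ ·) P (embed2 0 d) ↔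
      ∀ q ∈ projectFromApex d P, ξ ⬝ᵥ embed2 0 d ≤ Fin.init ξ ⬝ᵥ q := by
  constructor
  · rintro h _ ⟨p, ⟨hp, hpv⟩, rfl⟩
    exact (hP.apex_le_iff hp hpv).1 (h hp)
  · refine fun h => isMinOn_iff.2 fun p hp => ?_
    rcases eq_or_ne p (embed2 0 d) with rfl | hpv
    · exact le_rfl
    · exact (hP.apex_le_iff hp hpv).2 (h _ ⟨p, ⟨hp, hpv⟩, rfl⟩)

theorem proj_nonneg (hP : IsWeierstrassSupport d P) : ∀ q ∈ projectFromApex d P, 0 ≤ q := by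
  rintro _ ⟨p, ⟨hp, hpv⟩, rfl⟩ i
  exact mul_nonneg (div_nonneg (Nat.cast_nonneg d) (sub_pos.2 (hP.last_lt p hp hpv)).le)
    (hP.nonneg hp _)

theorem dotProduct_proj_pos (hP : IsWeierstrassSupport d P) (hζ : ∀ i, 0 < ζ i) {q : Fin n → ℝ}
    (hq : q ∈ projectFromApex d P) : 0 < ζ ⬝ᵥ q := by
  obtain ⟨p, ⟨hp, hpv⟩, rfl⟩ := hq
  have hd := hP.degree_pos hp hpv
  have hpd := hP.last_lt p hp hpv
  have hne : apexProj d p ≠ 0 := fun h => hP.init_ne_zero p hp hpv (by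
    rw [init_eq_smul_apexProj hd hpd, h, smul_zero])
  simpa using dotProduct_lt_dotProduct_of_pos hζ
    ((hP.proj_nonneg _ ⟨p, ⟨hp, hpv⟩, rfl⟩).lt_of_ne hne.symm)

theorem hasFiniteSublevels_proj (hP : IsWeierstrassSupport d P) :
    HasFiniteSublevels (projectFromApex d P) := by
  intro ζ hζ C
  have hpos : ∀ i, 0 < (Fin.snoc ζ 1 : Fin (n + 1) → ℝ) i := Fin.lastCases
    (by simp) fun i => by simpa using hζ i
  refine ((hP.hasFiniteSublevels _ hpos (C + d)).image (apexProj d)).subset ?_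
  rintro _ ⟨⟨p, ⟨hp, hpv⟩, rfl⟩, hC⟩
  refine ⟨p, ⟨hp, ?_⟩, rfl⟩
  -- `init p` is `apexProj d p` shrunk by a factor in `(0, 1]`, so `p` has bounded weight
  have hd := hP.degree_pos hp hpv
  have hpd := hP.last_lt p hp hpv
  have hproj := hP.dotProduct_proj_pos hζ ⟨p, ⟨hp, hpv⟩, rfl⟩
  have ht : (d - p (Fin.last n)) / d ≤ (1 : ℝ) :=
    div_le_one_of_le₀ (by linarith [hP.nonneg hp (Fin.last n)]) (Nat.cast_nonneg d)
  rw [dotProduct_eq_init_add_last, Fin.init_snoc, Fin.snoc_last, one_mul,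
    init_eq_smul_apexProj hd hpd, dotProduct_smul, smul_eq_mul]
  nlinarith

theorem exists_lift (hP : IsWeierstrassSupport d P) (hζ : ∀ i, 0 < ζ i) {v : Fin n → ℝ}
    (hv : v ∈ projectFromApex d P) (hmin : IsMinOn (ζ ⬝ᵥ ·) (projectFromApex d P) v) :
    ∃ ξ : Fin (n + 1) → ℝ, (∀ i, 0 < ξ i) ∧ Fin.init ξ = ζ ∧ ξ ⬝ᵥ embed2 0 d = ζ ⬝ᵥ v ∧
      IsMinOn (ξ ⬝ᵥ ·) P (embed2 0 d) := by
  obtain ⟨p, ⟨hp, hpv⟩, hpv'⟩ := hv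
  have hd : (d : ℝ) ≠ 0 := Nat.cast_ne_zero.2 (hP.degree_pos hp hpv).ne'
  have hval : (Fin.snoc ζ (ζ ⬝ᵥ v / d) : Fin (n + 1) → ℝ) ⬝ᵥ embed2 0 d = ζ ⬝ᵥ v := by
    rw [dotProduct_embed2_zero, Fin.snoc_last, div_mul_cancel₀ _ hd]
  refine ⟨Fin.snoc ζ (ζ ⬝ᵥ v / d), Fin.lastCases ?_ fun i => by simpa using hζ i,
    Fin.init_snoc _ _, hval, hP.isMinOn_apex_iff.2 fun q hq => ?_⟩
  · rw [hval, Fin.init_snoc]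
    exact hmin hq
  · simpa using div_pos (hP.dotProduct_proj_pos hζ ⟨p, ⟨hp, hpv⟩, hpv'⟩)
      (Nat.cast_pos.2 (hP.degree_pos hp hpv))

theorem exists_isLooseEdge_of_isLeast (hP : IsWeierstrassSupport d P) {v : Fin n → ℝ}
    (hv : IsLeast (projectFromApex d P) v) :
    ∃ (E : Set (Fin (n + 1) → ℝ)) (a : Fin (n + 1) → ℝ),
      IsLooseEdge (newtonHull P) E ∧ a ≠ embed2 0 d ∧ E = segment ℝ a (embed2 0 d) := by
  obtain ⟨p₁, ⟨hp₁, hp₁v⟩, rfl⟩ := hv.1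
  have hd := hP.degree_pos hp₁ hp₁v
  -- the least point of the projection is the only minimizer of every positive functional on it
  have hray : ∀ ξ : Fin (n + 1) → ℝ, (∀ i, 0 < ξ i) → IsMinOn (ξ ⬝ᵥ ·) P (embed2 0 d) →
      ∀ p ∈ P, ξ ⬝ᵥ p = ξ ⬝ᵥ embed2 0 d →
        ∃ t : ℝ, 0 ≤ t ∧ p = embed2 0 d + t • Fin.snoc (apexProj d p₁) (-d : ℝ) := by
    intro ξ hξ hmin p hp hpξ
    rcases eq_or_ne p (embed2 0 d) with rfl | hpv
    · exact ⟨0, le_rfl, by simp⟩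
    have hq : apexProj d p ∈ projectFromApex d P := ⟨p, ⟨hp, hpv⟩, rfl⟩
    have hpd := hP.last_lt p hp hpv
    have hξ' : ∀ i, 0 < Fin.init ξ i := fun i => hξ _
    have hpv₁ : apexProj d p₁ = apexProj d p := eq_of_le_of_dotProduct_le hξ' (hv.2 hq) (by
      rw [(hP.apex_eq_iff hp hpv).1 hpξ]
      exact hP.isMinOn_apex_iff.1 hmin _ hv.1)
    exact ⟨_, div_nonneg (sub_pos.2 hpd).le (Nat.cast_nonneg d),
      hpv₁ ▸ eq_embed2_add_smul hd hpd⟩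
  obtain ⟨ξ, hξ, hinit, hval, hmin⟩ := hP.exists_lift (fun _ => one_pos) hv.1
    (isMinOn_iff.2 fun q hq => dotProduct_le_dotProduct_of_nonneg_left (hv.2 hq) zero_le_one)
  set A := {p ∈ P | ξ ⬝ᵥ p = ξ ⬝ᵥ embed2 0 d}
  have hAfin : A.Finite := hP.hasFiniteSublevels.finite_argmin hξ _
  obtain ⟨a, -, hseg⟩ := exists_convexHull_eq_segment hAfin ⟨hP.apex_mem, rfl⟩
    fun p hp => hray ξ hξ hmin p hp.1 hp.2
  have hA : NPface (newtonHull P) ξ = convexHull ℝ A := NPface_newtonHull_eq hξ hP.apex_mem hmin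
  have hface : NPface (newtonHull P) ξ = segment ℝ a (embed2 0 d) := by
    rw [hA, hseg, segment_symm]
  have ha : a ≠ embed2 0 d := by
    rintro rfl
    have hp₁A : p₁ ∈ A := ⟨hp₁, (hP.apex_eq_iff hp₁ hp₁v).2 (by rw [hinit, hval])⟩
    have := hseg ▸ subset_convexHull ℝ A hp₁A
    exact hp₁v (by simpa using this)
  refine ⟨_, a, ⟨⟨ξ, fun i => (hξ i).le, hface.symm⟩, ?_, npDim_segment ha, ?_⟩, ha, rfl⟩
  · rw [← hface, hA]
    exact hAfin.isCompact_convexHull (𝕜 := ℝ)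
  rintro F ⟨η, hη, rfl⟩ hFc hF2 hEF
  have hapex : embed2 0 d ∈ NPface (newtonHull P) η := hEF (right_mem_segment ℝ a _)
  obtain ⟨hηpos, hFeq⟩ := NPface_eq_convexHull_of_isCompact hη hP.apex_mem hapex hFc
  have hηmin : IsMinOn (η ⬝ᵥ ·) P (embed2 0 d) := fun p hp => hapex.2 p (subset_newtonHull P hp)
  refine hF2.not_gt (Nat.lt_succ_of_le ?_)
  rw [hFeq, npDim_convexHull]
  exact npDim_le_one_of_subset_line fun p hp =>
    (hray η hηpos hηmin p hp.1 hp.2).imp fun _ ht => ht.2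

theorem exists_isLeast_of_isLooseEdge (hP : IsWeierstrassSupport d P)
    {a : Fin (n + 1) → ℝ} (ha : a ≠ embed2 0 d)
    (hE : IsLooseEdge (newtonHull P) (segment ℝ a (embed2 0 d))) :
    ∃ v, IsLeast (projectFromApex d P) v := by
  obtain ⟨⟨ξ, hξ, hEξ⟩, hEc, -, hloose⟩ := hE
  have hapex : embed2 0 d ∈ NPface (newtonHull P) ξ := hEξ ▸ right_mem_segment ℝ a _
  obtain ⟨hξpos, hξA⟩ := NPface_eq_convexHull_of_isCompact hξ hP.apex_mem hapex (hEξ ▸ hEc)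
  have hmin : IsMinOn (ξ ⬝ᵥ ·) P (embed2 0 d) := fun p hp => hapex.2 p (subset_newtonHull P hp)
  set A := {p ∈ P | ξ ⬝ᵥ p = ξ ⬝ᵥ embed2 0 d}
  have hEA : segment ℝ a (embed2 0 d) = convexHull ℝ A := hEξ.trans hξA
  -- every point of `A` lies on the edge, hence on the ray from the apex through `a`
  have hAproj : ∀ p ∈ A, p ≠ embed2 0 d → apexProj d p = apexProj d a := by
    intro p hp hpv
    have hpE : p ∈ segment ℝ (embed2 0 d) a := segment_symm ℝ a _ ▸ hEA ▸ subset_convexHull ℝ A hp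
    rw [segment_eq_image'] at hpE
    obtain ⟨θ, -, rfl⟩ := hpE
    have hθ : θ ≠ 0 := by rintro rfl; simp at hpv
    rw [apexProj_embed2_add_smul hθ, add_sub_cancel]
  obtain ⟨p₁, hp₁A, hp₁v⟩ : ∃ p ∈ A, p ≠ embed2 0 d := by
    by_contra! h
    have : segment ℝ a (embed2 0 d) ⊆ {embed2 0 d} :=
      hEA ▸ convexHull_min (fun p hp => h p hp) (convex_singleton _)
    exact ha (this (left_mem_segment ℝ a _))
  have hvQ : apexProj d a ∈ projectFromApex d P := ⟨p₁, ⟨hp₁A.1, hp₁v⟩, hAproj p₁ hp₁A hp₁v⟩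
  have hξv : Fin.init ξ ⬝ᵥ apexProj d a = ξ ⬝ᵥ embed2 0 d :=
    hAproj p₁ hp₁A hp₁v ▸ (hP.apex_eq_iff hp₁A.1 hp₁v).1 hp₁A.2
  have hvξ : ∀ q ∈ projectFromApex d P, q ≠ apexProj d a →
      Fin.init ξ ⬝ᵥ apexProj d a < Fin.init ξ ⬝ᵥ q := by
    rintro _ ⟨p, ⟨hp, hpv⟩, rfl⟩ hne
    refine (hξv ▸ hP.isMinOn_apex_iff.1 hmin _ ⟨p, ⟨hp, hpv⟩, rfl⟩).lt_of_ne fun h => hne ?_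
    exact hAproj p ⟨hp, (hP.apex_eq_iff hp hpv).2 (h.symm.trans hξv)⟩ hpv
  refine ⟨apexProj d a, hvQ, fun q hq i => not_lt.1 fun hqi => ?_⟩
  -- otherwise tilting `init ξ` yields a compact face through the edge containing a second ray
  obtain ⟨ζ, hζ, hζmin, _, ⟨p₂, ⟨hp₂, hp₂v⟩, rfl⟩, huv, hζu⟩ :=
    hP.hasFiniteSublevels_proj.exists_isMinOn_tie_of_lt hP.proj_nonneg (fun i => hξpos _) hvξ hq
      hqi
  obtain ⟨ξ', hξ', hinit, hval, hmin'⟩ := hP.exists_lift hζ hvQ hζmin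
  set A' := {p ∈ P | ξ' ⬝ᵥ p = ξ' ⬝ᵥ embed2 0 d}
  have hA' : ∀ p ∈ P, p ≠ embed2 0 d → ζ ⬝ᵥ apexProj d p = ζ ⬝ᵥ apexProj d a → p ∈ A' :=
    fun p hp hpv h => ⟨hp, (hP.apex_eq_iff hp hpv).2 (by rw [hinit, hval, h])⟩
  have hAA' : A ⊆ A' := fun p hp => by
    rcases eq_or_ne p (embed2 0 d) with rfl | hpv
    · exact ⟨hP.apex_mem, rfl⟩
    · exact hA' p hp.1 hpv (by rw [hAproj p hp hpv])
  refine hloose (convexHull ℝ A') ⟨ξ', fun i => (hξ' i).le,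
    (NPface_newtonHull_eq hξ' hP.apex_mem hmin').symm⟩
    ((hP.hasFiniteSublevels.finite_argmin hξ' _).isCompact_convexHull (𝕜 := ℝ))
    ?_ (hEA ▸ convexHull_mono hAA')
  rw [npDim_convexHull]
  refine two_le_npDim_s18 ⟨hP.apex_mem, rfl⟩ (hAA' hp₁A) (hA' p₂ hp₂ hp₂v hζu) ?_
  refine linearIndependent_of_apexProj_ne (d := d) (sub_ne_zero.2 hp₁v) (sub_ne_zero.2 hp₂v) ?_
  rwa [add_sub_cancel, add_sub_cancel, hAproj p₁ hp₁A hp₁v, ne_comm]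

theorem exists_isLooseEdge_iff (hP : IsWeierstrassSupport d P) :
    (∃ (E : Set (Fin (n + 1) → ℝ)) (a : Fin (n + 1) → ℝ),
      IsLooseEdge (newtonHull P) E ∧ a ≠ embed2 0 d ∧ E = segment ℝ a (embed2 0 d)) ↔
      ∃ v, IsLeast (projectFromApex d P) v :=
  ⟨fun ⟨_, _, hE, ha, hEa⟩ => hP.exists_isLeast_of_isLooseEdge ha (hEa ▸ hE),
    fun ⟨_, hv⟩ => hP.exists_isLooseEdge_of_isLeast hv⟩

end IsWeierstrassSupport

end Apex

section WeierstrassPolynomial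

variable {K : Type*} [Field K] {n d : ℕ} {f : Polynomial (MvPowerSeries (Fin n) K)}

def exponentSet (f : Polynomial (MvPowerSeries (Fin n) K)) : Set (Fin (n + 1) → ℝ) :=
  {p | ∃ (j : ℕ) (α : Fin n →₀ ℕ), MvPowerSeries.coeff α (f.coeff j) ≠ 0 ∧ p = embed2 α j}

theorem lt_of_coeff_ne_zero (hmonic : f.Monic) (hdeg : f.natDegree = d) {j : ℕ}
    {α : Fin n →₀ ℕ} (hc : MvPowerSeries.coeff α (f.coeff j) ≠ 0)
    (hne : embed2 α j ≠ embed2 0 d) : j < d := by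
  rcases lt_trichotomy j d with h | rfl | h
  · exact h
  · rw [← hdeg, hmonic.coeff_natDegree, MvPowerSeries.coeff_one] at hc
    obtain rfl : α = 0 := by_contra fun hα => hc (if_neg hα)
    exact absurd rfl hne
  · exact absurd (by rw [f.coeff_eq_zero_of_natDegree_lt (hdeg ▸ h), map_zero]) hc

theorem isWeierstrassSupport_exponentSet (hmonic : f.Monic) (hdeg : f.natDegree = d)
    (hW : ∀ j < d, MvPowerSeries.constantCoeff (f.coeff j) = 0) :
    IsWeierstrassSupport d (exponentSet f) where
  natCast := by
    rintro _ ⟨j, α, -, rfl⟩ i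
    induction i using Fin.lastCases <;> simp [embed2_eq_snoc]
  apex_mem := ⟨d, 0, by simp [← hdeg, hmonic.coeff_natDegree], rfl⟩
  last_lt := by
    rintro _ ⟨j, α, hc, rfl⟩ hne
    simpa [embed2_eq_snoc] using lt_of_coeff_ne_zero hmonic hdeg hc hne
  init_ne_zero := by
    rintro _ ⟨j, α, hc, rfl⟩ hne h0
    obtain rfl : α = 0 := Finsupp.ext fun i => by simpa [embed2_eq_snoc] using congrFun h0 i
    exact hc (by rw [MvPowerSeries.coeff_zero_eq_constantCoeff_apply,
      hW j (lt_of_coeff_ne_zero hmonic hdeg hc hne)])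

theorem projectFromApex_exponentSet (hmonic : f.Monic) (hdeg : f.natDegree = d) :
    projectFromApex d (exponentSet f) = {p : Fin n → ℝ | ∃ (j : ℕ) (α : Fin n →₀ ℕ), j < d ∧
      MvPowerSeries.coeff α (f.coeff j) ≠ 0 ∧
        p = fun i => ((d : ℝ) / ((d : ℝ) - (j : ℝ))) * (α i : ℝ)} := by
  ext q
  constructor
  · rintro ⟨_, ⟨⟨j, α, hc, rfl⟩, hne⟩, rfl⟩
    exact ⟨j, α, lt_of_coeff_ne_zero hmonic hdeg hc hne, hc, apexProj_embed2 α j⟩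
  · rintro ⟨j, α, hj, hc, rfl⟩
    refine ⟨embed2 α j, ⟨⟨j, α, hc, rfl⟩, fun h => hj.ne ?_⟩, apexProj_embed2 α j⟩
    simpa [embed2_eq_snoc] using congrFun (Set.mem_singleton_iff.1 h) (Fin.last n)

end WeierstrassPolynomial

/-- a monic Weierstrass polynomial of degree `d` has an orthant
associated polyhedron iff its Newton polyhedron has a loose edge with endpoint
`(0,…,0,d)`. -/
theorem orthant_iff_loose_edge {K : Type*} [Field K] {n : ℕ}
    (f : Polynomial (MvPowerSeries (Fin n) K)) (d : ℕ)
    (hmonic : f.Monic) (hdeg : f.natDegree = d)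
    (hW : ∀ j < d, MvPowerSeries.constantCoeff (f.coeff j) = 0)
    (projΔ : Set (Fin n → ℝ))
    (hproj : projΔ = {x | ∃ y ∈ convexHull ℝ {p : Fin n → ℝ |
        ∃ (j : ℕ) (α : Fin n →₀ ℕ), j < d ∧ MvPowerSeries.coeff α (f.coeff j) ≠ 0 ∧
          p = fun i => ((d : ℝ) / ((d : ℝ) - (j : ℝ))) * (α i : ℝ)},
      ∃ z : Fin n → ℝ, (∀ i, 0 ≤ z i) ∧ x = y + z}) :
    (∃! v, IsVertexOf projΔ v) ↔
      ∃ (E : Set (Fin (n+1) → ℝ)) (a : Fin (n+1) → ℝ),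
        IsLooseEdge (npOfPoly f) E ∧ a ≠ embed2 0 d ∧ E = segment ℝ a (embed2 0 d) := by
  have hP := isWeierstrassSupport_exponentSet hmonic hdeg hW
  have hΔ : projΔ = newtonHull (projectFromApex d (exponentSet f)) := by
    rw [hproj, projectFromApex_exponentSet hmonic hdeg]
    rfl
  rw [hΔ, existsUnique_isVertexOf_newtonHull_iff hP.proj_nonneg hP.hasFiniteSublevels_proj]
  exact hP.exists_isLooseEdge_iff.symm
end
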